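/- arXiv:math/0502128 — 3 statements merged into one kernel-verified Lean document; each statement's English description precedes it below -/
import Mathlib

section
/- Let n ≥ 2 and let c, d be real numbers. On the open set V = {x ∈ ℝ^n : c·|x|² + d ≠ 0}, where |x|² = Σ_{i=1}^n x_i², the conformally flat metric 𝔥 with components 𝔥_{ij}(x) = (c·|x|² + d)^{−2} δ_{ij} has constant sectional curvature 4cd: 𝔥(R(𝔥)_{X,Y}Y, X) = 4cd·(𝔥(X,X)𝔥(Y,Y) − 𝔥(X,Y)²) for all vector fields X, Y on V. -/
open scoped BigOperators

noncomputable section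

/-- Points of ℝⁿ. -/
abbrev Pt (n : ℕ) := Fin n → ℝ
/-- Vector fields (globally defined functions; conditions are imposed on an open set). -/
abbrev VF (n : ℕ) := Pt n → Fin n → ℝ
/-- 1-forms. -/
abbrev OneForm (n : ℕ) := Pt n → Fin n → ℝ
/-- Metrics: smooth maps into symmetric invertible matrices. -/
abbrev Met (n : ℕ) := Pt n → Matrix (Fin n) (Fin n) ℝ
/-- (1,2)-tensor fields (multiplications on tangent vectors): components `c t k i j` = c^k_{ij}(t). -/
abbrev Mul2 (n : ℕ) := Pt n → Fin n → Fin n → Fin n → ℝ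

variable {n : ℕ}

/-- Partial derivative ∂ᵢ f (t). -/
def pder (i : Fin n) (f : Pt n → ℝ) (t : Pt n) : ℝ :=
  fderiv ℝ f t (Pi.single i 1)

/-- Smoothness (on `U`) of a vector field or a 1-form. -/
def SmoothVF (U : Set (Pt n)) (X : VF n) : Prop :=
  ∀ k, ContDiffOn ℝ (⊤ : ℕ∞) (fun t => X t k) U

def SmoothMet (U : Set (Pt n)) (g : Met n) : Prop :=
  ∀ i j, ContDiffOn ℝ (⊤ : ℕ∞) (fun t => g t i j) U

def SmoothMul2 (U : Set (Pt n)) (c : Mul2 n) : Prop :=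
  ∀ k i j, ContDiffOn ℝ (⊤ : ℕ∞) (fun t => c t k i j) U

/-- `g` is a (pseudo-Riemannian) metric on `U`: smooth, symmetric, invertible. -/
def IsMetricOn (U : Set (Pt n)) (g : Met n) : Prop :=
  SmoothMet U g ∧ ∀ t ∈ U, (g t).IsSymm ∧ IsUnit (g t)

/-- The 1-form g(X). -/
def mdown (g : Met n) (X : VF n) : OneForm n := fun t k => ∑ j, g t k j * X t j
/-- The vector field g*α. -/
def mup (g : Met n) (α : OneForm n) : VF n := fun t k => ∑ j, (g t)⁻¹ k j * α t j
/-- g*(α, β). -/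
def mup2 (g : Met n) (α β : OneForm n) (t : Pt n) : ℝ :=
  ∑ i, ∑ j, (g t)⁻¹ i j * α t i * β t j
/-- g(X, Y). -/
def mdown2 (g : Met n) (X Y : VF n) (t : Pt n) : ℝ :=
  ∑ i, ∑ j, g t i j * X t i * Y t j

/-- Christoffel symbols Γ(g)^k_{ij}(t). -/
def chr (g : Met n) (k i j : Fin n) (t : Pt n) : ℝ :=
  (1/2) * ∑ l, (g t)⁻¹ k l *
    (pder i (fun s => g s j l) t + pder j (fun s => g s i l) t - pder l (fun s => g s i j) t)

/-- Levi-Civita covariant derivative ∇^g_X Y of a vector field. -/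
def covV (g : Met n) (X Y : VF n) : VF n :=
  fun t k => ∑ i, X t i * (pder i (fun s => Y s k) t + ∑ m, chr g k i m t * Y t m)

/-- Levi-Civita covariant derivative ∇^g_X α of a 1-form. -/
def covF (g : Met n) (X : VF n) (α : OneForm n) : OneForm n :=
  fun t k => ∑ i, X t i * (pder i (fun s => α s k) t - ∑ m, chr g m i k t * α t m)

/-- Lie bracket [X, Y]. -/
def vbr (X Y : VF n) : VF n :=
  fun t k => ∑ i, (X t i * pder i (fun s => Y s k) t - Y t i * pder i (fun s => X s k) t)

/-- Curvature R(g)_{X,Y} Z = ∇_X ∇_Y Z − ∇_Y ∇_X Z − ∇_{[X,Y]} Z. -/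
def curvV (g : Met n) (X Y Z : VF n) : VF n :=
  fun t k => covV g X (covV g Y Z) t k - covV g Y (covV g X Z) t k
    - covV g (vbr X Y) Z t k

/-- Curvature acting on 1-forms: (R(g)_{X,Y} α)(Z) = −α(R(g)_{X,Y} Z). -/
def curvF (g : Met n) (X Y : VF n) (α : OneForm n) : OneForm n :=
  fun t k => - ∑ m, α t m * curvV g X Y (fun _ => Pi.single k 1) t m

/-- `g` is flat on `U`: the curvature tensor vanishes identically. -/
def FlatOn (U : Set (Pt n)) (g : Met n) : Prop :=
  ∀ X Y Z : VF n, SmoothVF U X → SmoothVF U Y → SmoothVF U Z →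
    ∀ t ∈ U, ∀ k, curvV g X Y Z t k = 0

/-- `g` has constant sectional curvature `s` on `U`. -/
def ConstSecCurv (U : Set (Pt n)) (g : Met n) (s : ℝ) : Prop :=
  ∀ X Y : VF n, SmoothVF U X → SmoothVF U Y → ∀ t ∈ U,
    mdown2 g (curvV g X Y Y) X t
      = s * (mdown2 g X X t * mdown2 g Y Y t - (mdown2 g X Y t) ^ 2)

/-- The metric g_λ of the pencil: its inverse matrix is g⁻¹ + λ g̃⁻¹. -/
def pencil (g g' : Met n) (lam : ℝ) : Met n :=
  fun t => ((g t)⁻¹ + lam • (g' t)⁻¹)⁻¹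

/-- Almost compatibility of the pair (g, g̃) on `U`. -/
def AlmostCompatible (U : Set (Pt n)) (g g' : Met n) : Prop :=
  ∀ lam : ℝ, (∀ t ∈ U, IsUnit ((g t)⁻¹ + lam • (g' t)⁻¹)) →
    ∀ X : VF n, SmoothVF U X → ∀ α : OneForm n, SmoothVF U α →
      ∀ t ∈ U, ∀ k,
        mup (pencil g g' lam) (covF (pencil g g' lam) X α) t k
          = mup g (covF g X α) t k + lam * mup g' (covF g' X α) t k

/-- Compatibility of the pair (g, g̃) on `U`. -/
def Compatible (U : Set (Pt n)) (g g' : Met n) : Prop :=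
  AlmostCompatible U g g' ∧
  ∀ lam : ℝ, (∀ t ∈ U, IsUnit ((g t)⁻¹ + lam • (g' t)⁻¹)) →
    ∀ X Y : VF n, SmoothVF U X → SmoothVF U Y →
      ∀ α : OneForm n, SmoothVF U α →
        ∀ t ∈ U, ∀ k,
          mup (pencil g g' lam) (curvF (pencil g g' lam) X Y α) t k
            = mup g (curvF g X Y α) t k + lam * mup g' (curvF g' X Y α) t k

/-- The multiplication α ∘ β = ∇^g_{g*α} β − ∇^{g̃}_{g*α} β on 1-forms. -/
def circM (g g' : Met n) (α β : OneForm n) : OneForm n :=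
  fun t k => covF g (mup g α) β t k - covF g' (mup g α) β t k

/-- The endomorphism T(u) = g(E) ∘ u of 1-forms, as a pointwise matrix
(`∘` being tensorial in its second argument). -/
def Tmat (g g' : Met n) (E : VF n) (t : Pt n) : Matrix (Fin n) (Fin n) ℝ :=
  Matrix.of fun k m => circM g g' (mdown g E) (fun _ => Pi.single m 1) t k

/-- The triple (g, g̃, E) is regular on `U` if T is invertible at every point. -/
def RegularTriple (U : Set (Pt n)) (g g' : Met n) (E : VF n) : Prop :=
  ∀ t ∈ U, IsUnit (Tmat g g' E t)

/-- T⁻¹(v). -/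
def TinvF (g g' : Met n) (E : VF n) (v : OneForm n) : OneForm n :=
  fun t k => ∑ m, (Tmat g g' E t)⁻¹ k m * v t m

/-- The multiplication u • v = u ∘ T⁻¹(v) on 1-forms. -/
def bulF (g g' : Met n) (E : VF n) (u v : OneForm n) : OneForm n :=
  circM g g' u (TinvF g g' E v)

/-- The multiplication • on vector fields: X • Y = g̃*((g̃X) • (g̃Y)). -/
def bulV (g g' : Met n) (E : VF n) (X Y : VF n) : VF n :=
  mup g' (bulF g g' E (mdown g' X) (mdown g' Y))

/-- The multiplication • associated to the regular triple (g, g̃, E), as a (1,2)-tensor. -/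
def bulMul (g g' : Met n) (E : VF n) : Mul2 n :=
  fun t k i j => bulV g g' E (fun _ => Pi.single i 1) (fun _ => Pi.single j 1) t k

/-- Applying a (1,2)-tensor to vector fields. -/
def mapp (c : Mul2 n) (X Y : VF n) : VF n :=
  fun t k => ∑ i, ∑ j, c t k i j * X t i * Y t j

/-- Transporting a multiplication on tangent vectors to a multiplication
on 1-forms via the metric: u • v := g̃((g̃*u) • (g̃*v)). -/
def formMul (g' : Met n) (c : Mul2 n) (u v : OneForm n) : OneForm n :=
  mdown g' (mapp c (mup g' u) (mup g' v))

/-- Lie derivative of a function. -/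
def lieFun (E : VF n) (φ : Pt n → ℝ) : Pt n → ℝ :=
  fun t => ∑ i, E t i * pder i φ t

/-- Lie derivative of a 1-form: (L_E α)(X) = E(α(X)) − α([E,X]). -/
def lieOne (E : VF n) (α : OneForm n) : OneForm n :=
  fun t k => (∑ i, E t i * pder i (fun s => α s k) t) + ∑ i, α t i * pder k (fun s => E s i) t

/-- Lie derivative of a metric: (L_E g)(X,Y) = E(g(X,Y)) − g([E,X],Y) − g(X,[E,Y]). -/
def lieMet (E : VF n) (g : Met n) : Met n := fun t =>
  Matrix.of fun k j =>
    (∑ i, E t i * pder i (fun s => g s k j) t)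
    + (∑ i, g t i j * pder k (fun s => E s i) t)
    + (∑ i, g t k i * pder j (fun s => E s i) t)

/-- Lie derivative of a multiplication ((1,2)-tensor):
(L_E c)(u,v) = L_E(c(u,v)) − c(L_E u, v) − c(u, L_E v), componentwise. -/
def lieMul (E : VF n) (c : Mul2 n) : Mul2 n :=
  fun t k i j =>
    vbr E (mapp c (fun _ => Pi.single i 1) (fun _ => Pi.single j 1)) t k
    - mapp c (vbr E (fun _ => Pi.single i 1)) (fun _ => Pi.single j 1) t k
    - mapp c (fun _ => Pi.single i 1) (vbr E (fun _ => Pi.single j 1)) t k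

/-- Lie derivative of a multiplication on 1-forms (applied to the pencil multiplication ∘). -/
def lieCirc (E : VF n) (g g' : Met n) (u v : OneForm n) : OneForm n :=
  fun t k => lieOne E (circM g g' u v) t k - circM g g' (lieOne E u) v t k
    - circM g g' u (lieOne E v) t k

/-- ∇^g_X(•)(Y,Z) := ∇^g_X(Y•Z) − (∇^g_X Y)•Z − Y•(∇^g_X Z), for a multiplication c. -/
def covMul (g : Met n) (c : Mul2 n) (X Y Z : VF n) : VF n :=
  fun t k => covV g X (mapp c Y Z) t k - mapp c (covV g X Y) Z t k
    - mapp c Y (covV g X Z) t k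

/-- The (4,0)-tensor ∇^g(•)(X,Y,Z,V) := g(∇^g_X(•)(Y,Z), V). -/
def covMul4 (g : Met n) (c : Mul2 n) (X Y Z V : VF n) (t : Pt n) : ℝ :=
  mdown2 g (covMul g c X Y Z) V t

/-- Total symmetry of the (4,0)-tensor ∇^g(•) (the F-manifold condition). -/
def TotSym (U : Set (Pt n)) (g : Met n) (c : Mul2 n) : Prop :=
  ∀ X Y Z V : VF n, SmoothVF U X → SmoothVF U Y → SmoothVF U Z → SmoothVF U V →
    ∀ t ∈ U,
      covMul4 g c X Y Z V t = covMul4 g c Y X Z V t ∧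
      covMul4 g c X Y Z V t = covMul4 g c X Z Y V t ∧
      covMul4 g c X Y Z V t = covMul4 g c X Y V Z t

/-- Weak F-manifold structure (U, •, g̃, E), with identity `e`, •-inverse `Einv` of E,
and rescaling functions `Dt` (for the metric) and `k` (for the multiplication). -/
structure IsWeakF (U : Set (Pt n)) (c : Mul2 n) (g' : Met n) (E e Einv : VF n)
    (Dt k : Pt n → ℝ) : Prop where
  met : IsMetricOn U g'
  smooth_c : SmoothMul2 U c
  smooth_E : SmoothVF U E
  smooth_e : SmoothVF U e
  smooth_Einv : SmoothVF U Einv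
  smooth_Dt : ContDiffOn ℝ (⊤ : ℕ∞) Dt U
  smooth_k : ContDiffOn ℝ (⊤ : ℕ∞) k U
  comm : ∀ t ∈ U, ∀ a i j, c t a i j = c t a j i
  assoc : ∀ t ∈ U, ∀ a x y z, (∑ m, c t a m z * c t m x y) = ∑ m, c t a x m * c t m y z
  unit : ∀ t ∈ U, ∀ a i, (∑ j, c t a j i * e t j) = if a = i then (1 : ℝ) else 0
  invar : ∀ t ∈ U, ∀ x y z, (∑ m, g' t m z * c t m x y) = ∑ m, g' t x m * c t m y z
  lie_g : ∀ t ∈ U, ∀ i j, lieMet E g' t i j = Dt t * g' t i j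
  lie_c : ∀ t ∈ U, ∀ a i j, lieMul E c t a i j = k t * c t a i j
  e_inv : ∀ t ∈ U, ∀ a, (∑ i, ∑ j, c t a i j * E t i * Einv t j) = e t a
  sym_E : ∀ Y Z V : VF n, SmoothVF U Y → SmoothVF U Z → SmoothVF U V → ∀ t ∈ U,
    covMul4 g' c E Y Z V t = covMul4 g' c Y E Z V t

/-- Weak quasi-homogeneous pencil (h, h̃) with Euler vector field E. -/
structure IsWQH (U : Set (Pt n)) (h h' : Met n) (E : VF n) (D Dt : Pt n → ℝ) : Prop where
  met_h : IsMetricOn U h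
  met_h' : IsMetricOn U h'
  compat : Compatible U h h'
  smooth_E : SmoothVF U E
  smooth_D : ContDiffOn ℝ (⊤ : ℕ∞) D U
  smooth_Dt : ContDiffOn ℝ (⊤ : ℕ∞) Dt U
  lie_h' : ∀ t ∈ U, ∀ i j, lieMet E h' t i j = Dt t * h' t i j
  cov_E : ∀ X : VF n, SmoothVF U X → ∀ t ∈ U, ∀ a, covV h X E t a = (D t / 2) * X t a
  diff_const : ∃ c₀ : ℝ, ∀ t ∈ U, Dt t - D t = c₀

/-- Frobenius manifold structure (U, •, g̃, E). -/
structure IsFrob (U : Set (Pt n)) (c : Mul2 n) (g' : Met n) (E e : VF n) (D k : ℝ) : Prop where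
  met : IsMetricOn U g'
  flat : FlatOn U g'
  smooth_c : SmoothMul2 U c
  smooth_E : SmoothVF U E
  smooth_e : SmoothVF U e
  comm : ∀ t ∈ U, ∀ a i j, c t a i j = c t a j i
  assoc : ∀ t ∈ U, ∀ a x y z, (∑ m, c t a m z * c t m x y) = ∑ m, c t a x m * c t m y z
  unit : ∀ t ∈ U, ∀ a i, (∑ j, c t a j i * e t j) = if a = i then (1 : ℝ) else 0
  invar : ∀ t ∈ U, ∀ x y z, (∑ m, g' t m z * c t m x y) = ∑ m, g' t x m * c t m y z
  e_par : ∀ X : VF n, SmoothVF U X → ∀ t ∈ U, ∀ a, covV g' X e t a = 0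
  tot_sym : TotSym U g' c
  nabla2E : ∀ X Y : VF n, SmoothVF U X → SmoothVF U Y → ∀ t ∈ U, ∀ a,
    covV g' X (covV g' Y E) t a - covV g' (covV g' X Y) E t a = 0
  lie_g : ∀ t ∈ U, ∀ i j, lieMet E g' t i j = D * g' t i j
  lie_c : ∀ t ∈ U, ∀ a i j, lieMul E c t a i j = k * c t a i j

/-- The intersection metric `g` of a Frobenius manifold: g*g̃ = E•, together with
its standard properties. -/
structure IsIntersection (U : Set (Pt n)) (c : Mul2 n) (g g' : Met n) (E : VF n)
    (d : ℝ) : Prop where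
  met : IsMetricOn U g
  defn : ∀ t ∈ U, ∀ a j, (∑ l, (g t)⁻¹ a l * g' t l j) = ∑ i, c t a i j * E t i
  lie_g : ∀ t ∈ U, ∀ i j, lieMet E g t i j = (1 - d) * g t i j
  compat : Compatible U g g'
  regular : RegularTriple U g g' E
  mul_eq : ∀ t ∈ U, ∀ a i j, bulMul g g' E t a i j = c t a i j

open scoped ContDiff

namespace S13

variable {n : ℕ}

/-! ### pder calculus -/

theorem pder_congr {U : Set (Pt n)} (hU : IsOpen U) {t : Pt n} (ht : t ∈ U)
    {f g : Pt n → ℝ} (h : ∀ s ∈ U, f s = g s) (i : Fin n) : pder i f t = pder i g t := by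
  unfold pder
  rw [Filter.EventuallyEq.fderiv_eq (Filter.eventually_of_mem (hU.mem_nhds ht) h)]

theorem diffAt {U : Set (Pt n)} (hU : IsOpen U) {t : Pt n} (ht : t ∈ U)
    {f : Pt n → ℝ} {m : WithTop ℕ∞} (hf : ContDiffOn ℝ m f U) (hm : 1 ≤ m) :
    DifferentiableAt ℝ f t :=
  ((hf.differentiableOn (zero_lt_one.trans_le hm).ne') t ht).differentiableAt (hU.mem_nhds ht)

theorem pder_add {t : Pt n} {f g : Pt n → ℝ} (hf : DifferentiableAt ℝ f t)
    (hg : DifferentiableAt ℝ g t) (i : Fin n) :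
    pder i (fun s => f s + g s) t = pder i f t + pder i g t := by
  simp [pder, fderiv_fun_add hf hg]

theorem pder_sub {t : Pt n} {f g : Pt n → ℝ} (hf : DifferentiableAt ℝ f t)
    (hg : DifferentiableAt ℝ g t) (i : Fin n) :
    pder i (fun s => f s - g s) t = pder i f t - pder i g t := by
  simp [pder, fderiv_fun_sub hf hg]

theorem pder_mul {t : Pt n} {f g : Pt n → ℝ} (hf : DifferentiableAt ℝ f t)
    (hg : DifferentiableAt ℝ g t) (i : Fin n) :
    pder i (fun s => f s * g s) t = f t * pder i g t + g t * pder i f t := by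
  simp [pder, fderiv_fun_mul hf hg]

theorem pder_const {t : Pt n} (a : ℝ) (i : Fin n) : pder i (fun _ => a) t = 0 := by
  simp [pder]

theorem pder_const_mul {t : Pt n} {f : Pt n → ℝ} (hf : DifferentiableAt ℝ f t) (a : ℝ)
    (i : Fin n) : pder i (fun s => a * f s) t = a * pder i f t := by
  simp [pder, fderiv_const_mul hf]

theorem pder_sum {t : Pt n} {ι : Type*} (u : Finset ι) {f : ι → Pt n → ℝ}
    (hf : ∀ j ∈ u, DifferentiableAt ℝ (f j) t) (i : Fin n) :
    pder i (fun s => ∑ j ∈ u, f j s) t = ∑ j ∈ u, pder i (f j) t := by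
  simp [pder, fderiv_fun_sum hf]

theorem pder_coord {t : Pt n} (i j : Fin n) :
    pder i (fun s : Pt n => s j) t = if j = i then 1 else 0 := by
  have : (fun s : Pt n => s j) = fun s => (ContinuousLinearMap.proj (R := ℝ)
      (φ := fun _ : Fin n => ℝ) j) s := rfl
  rw [pder, this, ContinuousLinearMap.fderiv]
  simp [Pi.single_apply]

theorem pder_smoothOn {U : Set (Pt n)} (hU : IsOpen U) {f : Pt n → ℝ}
    (hf : ContDiffOn ℝ ∞ f U) (i : Fin n) :
    ContDiffOn ℝ ∞ (fun s => pder i f s) U := by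
  have h1 : ContDiffOn ℝ ∞ (fderiv ℝ f) U :=
    hf.fderiv_of_isOpen hU (by exact_mod_cast le_refl _)
  exact h1.clm_apply contDiffOn_const

theorem pder_comm {U : Set (Pt n)} (hU : IsOpen U) {t : Pt n} (ht : t ∈ U)
    {f : Pt n → ℝ} (hf : ContDiffOn ℝ ∞ f U) (i j : Fin n) :
    pder i (fun s => pder j f s) t = pder j (fun s => pder i f s) t := by
  have h1 : ContDiffOn ℝ ∞ (fderiv ℝ f) U :=
    hf.fderiv_of_isOpen hU (by exact_mod_cast le_refl _)
  have hx : HasFDerivAt (fderiv ℝ f) (fderiv ℝ (fderiv ℝ f) t) t :=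
    (((h1.differentiableOn (by norm_cast)) t ht).differentiableAt (hU.mem_nhds ht)).hasFDerivAt
  have hEv : ∀ᶠ y in nhds t, HasFDerivAt f (fderiv ℝ f y) y := by
    filter_upwards [hU.mem_nhds ht] with y hy
    exact (diffAt hU hy hf (by norm_cast)).hasFDerivAt
  have sym := second_derivative_symmetric_of_eventually hEv hx
  have key : ∀ u : Pt n, pder i (fun s => fderiv ℝ f s u) t
      = fderiv ℝ (fderiv ℝ f) t (Pi.single i 1) u := by
    intro u
    have hc : HasFDerivAt (fun s => fderiv ℝ f s u)
        (((fderiv ℝ f t).comp (0 : Pt n →L[ℝ] Pt n))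
          + (fderiv ℝ (fderiv ℝ f) t).flip u) t :=
      hx.clm_apply (hasFDerivAt_const u t)
    rw [pder, hc.fderiv]
    simp
  have key2 : ∀ u : Pt n, pder j (fun s => fderiv ℝ f s u) t
      = fderiv ℝ (fderiv ℝ f) t (Pi.single j 1) u := by
    intro u
    have hc : HasFDerivAt (fun s => fderiv ℝ f s u)
        (((fderiv ℝ f t).comp (0 : Pt n →L[ℝ] Pt n))
          + (fderiv ℝ (fderiv ℝ f) t).flip u) t :=
      hx.clm_apply (hasFDerivAt_const u t)
    rw [pder, hc.fderiv]
    simp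
  show pder i (fun s => fderiv ℝ f s (Pi.single j 1)) t
      = pder j (fun s => fderiv ℝ f s (Pi.single i 1)) t
  rw [key, key2, sym]

end S13

namespace S13

variable {n : ℕ}

theorem pder_inv {t : Pt n} {f : Pt n → ℝ} (hf : DifferentiableAt ℝ f t) (h0 : f t ≠ 0)
    (i : Fin n) : pder i (fun s => (f s)⁻¹) t = -(pder i f t) / (f t) ^ 2 := by
  have h : HasFDerivAt (fun s => (f s)⁻¹) (-((f t) ^ 2)⁻¹ • fderiv ℝ f t) t :=
    (hasDerivAt_inv h0).comp_hasFDerivAt t hf.hasFDerivAt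
  rw [pder, h.fderiv]
  simp [pder]
  ring

theorem pder_mul_const {t : Pt n} {f : Pt n → ℝ} (hf : DifferentiableAt ℝ f t) (a : ℝ)
    (i : Fin n) : pder i (fun s => f s * a) t = pder i f t * a := by
  simp [pder, fderiv_mul_const hf]
  ring

/-- The conformal factor φ. -/
def ph (c d : ℝ) (t : Pt n) : ℝ := c * (∑ i, (t i) ^ 2) + d

/-- The open set where φ ≠ 0. -/
def Us (c d : ℝ) : Set (Pt n) := {x | ph c d x ≠ 0}

theorem contDiff_ph (c d : ℝ) : ContDiff ℝ ∞ (ph c d (n := n)) := by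
  unfold ph
  exact (contDiff_const.mul (ContDiff.sum fun i _ =>
    ((ContinuousLinearMap.proj (R := ℝ) (φ := fun _ : Fin n => ℝ) i).contDiff).pow 2)).add
    contDiff_const

theorem isOpen_Us (c d : ℝ) : IsOpen (Us c d (n := n)) :=
  isOpen_compl_singleton.preimage (contDiff_ph c d).continuous

theorem diff_coord {t : Pt n} (j : Fin n) : DifferentiableAt ℝ (fun s : Pt n => s j) t :=
  (ContinuousLinearMap.proj (R := ℝ) (φ := fun _ : Fin n => ℝ) j).differentiableAt

theorem diff_ph {c d : ℝ} {t : Pt n} : DifferentiableAt ℝ (ph c d) t :=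
  (contDiff_ph c d).differentiable (by norm_cast) t

theorem pder_ph (c d : ℝ) (t : Pt n) (i : Fin n) : pder i (ph c d) t = 2 * c * t i := by
  have h1 : ∀ m : Fin n, (fun s : Pt n => (s m) ^ 2) = fun s => s m * s m := by
    intro m; ext s; ring
  have : ph c d (n := n) = fun s => c * (∑ m, (s m) ^ 2) + (fun _ : Pt n => d) s := rfl
  rw [this, pder_add (by fun_prop) (differentiableAt_const d), pder_const,
    pder_const_mul (by fun_prop)]
  rw [pder_sum Finset.univ (fun j _ => by fun_prop)]
  have h2 : ∀ m : Fin n, pder i (fun s : Pt n => (s m) ^ 2) t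
      = t m * (if m = i then 1 else 0) + t m * (if m = i then 1 else 0) := by
    intro m
    rw [h1 m, pder_mul (diff_coord m) (diff_coord m), pder_coord]
  simp only [h2]
  simp [Finset.sum_add_distrib, mul_ite, Finset.sum_ite_eq', mul_comm]
  ring

/-- The conformally flat metric of the statement. -/
def met (c d : ℝ) : Met n := fun x => Matrix.of fun i j : Fin n =>
  if i = j then ((c * (∑ m, (x m) ^ 2) + d) ^ 2)⁻¹ else 0

theorem met_apply (c d : ℝ) (t : Pt n) (i j : Fin n) :
    met c d t i j = if i = j then ((ph c d t) ^ 2)⁻¹ else 0 := rfl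

theorem met_inv_apply (c d : ℝ) {t : Pt n} (ht : ph c d t ≠ 0) (k l : Fin n) :
    (met c d t)⁻¹ k l = if k = l then (ph c d t) ^ 2 else 0 := by
  have hdiag : met c d t = Matrix.diagonal (fun _ : Fin n => ((ph c d t) ^ 2)⁻¹) := by
    ext i j
    by_cases h : i = j <;> simp [met_apply, Matrix.diagonal, h]
  have hinv : met c d t * Matrix.diagonal (fun _ : Fin n => (ph c d t) ^ 2) = 1 := by
    rw [hdiag, Matrix.diagonal_mul_diagonal]
    have : (fun _ : Fin n => ((ph c d t) ^ 2)⁻¹ * (ph c d t) ^ 2) = fun _ => (1 : ℝ) := by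
      funext _; exact inv_mul_cancel₀ (pow_ne_zero 2 ht)
    rw [this, Matrix.diagonal_one]
  rw [Matrix.inv_eq_right_inv hinv]
  by_cases h : k = l <;> simp [Matrix.diagonal, h]

theorem pder_met (c d : ℝ) {t : Pt n} (ht : ph c d t ≠ 0) (l i j : Fin n) :
    pder l (fun s => met c d s i j) t
      = if i = j then -(4 * c * t l) * ((ph c d t) ^ 3)⁻¹ else 0 := by
  by_cases h : i = j
  · have hfun : (fun s => met c d s i j) = fun s => ((ph c d s) ^ 2)⁻¹ := by
      ext s; simp [met_apply, h, ph]
    have hsq : (fun s : Pt n => (ph c d s) ^ 2) = fun s : Pt n => ph c d s * ph c d s := by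
      funext s; ring
    rw [hfun]
    rw [pder_inv (by exact diff_ph.pow 2) (pow_ne_zero 2 ht) l]
    rw [hsq, pder_mul diff_ph diff_ph, pder_ph]
    rw [if_pos h]
    field_simp
    ring
  · have hfun : (fun s => met c d s i j) = fun _ => (0 : ℝ) := by
      ext s; simp [met_apply, h]
    rw [hfun, pder_const]
    simp [h]

/-- Closed form of the Christoffel symbols. -/
def Gam (c d : ℝ) (k i j : Fin n) (t : Pt n) : ℝ :=
  (-2 * c) * (ph c d t)⁻¹ *
    (t i * (if j = k then 1 else 0) + t j * (if i = k then 1 else 0)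
      - t k * (if i = j then 1 else 0))

theorem chr_eq (c d : ℝ) {t : Pt n} (ht : ph c d t ≠ 0) (k i j : Fin n) :
    chr (met c d) k i j t = Gam c d k i j t := by
  unfold chr Gam
  have hsum : ∀ l : Fin n, (met c d t)⁻¹ k l *
      (pder i (fun s => met c d s j l) t + pder j (fun s => met c d s i l) t
        - pder l (fun s => met c d s i j) t)
      = if k = l then (ph c d t) ^ 2 *
      ((if j = l then -(4 * c * t i) * ((ph c d t) ^ 3)⁻¹ else 0)
        + (if i = l then -(4 * c * t j) * ((ph c d t) ^ 3)⁻¹ else 0)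
        - (if i = j then -(4 * c * t l) * ((ph c d t) ^ 3)⁻¹ else 0)) else 0 := by
    intro l
    rw [met_inv_apply c d ht, pder_met c d ht, pder_met c d ht, pder_met c d ht]
    by_cases h : k = l <;> simp [h]
  simp only [hsum, Finset.sum_ite_eq, Finset.mem_univ, if_true]
  by_cases h1 : j = k <;> by_cases h2 : i = k <;> by_cases h3 : i = j <;>
    simp [h1, h2, h3, eq_comm] <;> (try split_ifs) <;> (try field_simp) <;> (try ring)

end S13

namespace S13

variable {n : ℕ}

theorem mem_Us {c d : ℝ} {t : Pt n} (ht : t ∈ Us c d) : ph c d t ≠ 0 := ht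

theorem smooth_coord (m : Fin n) : ContDiff ℝ ∞ (fun s : Pt n => s m) :=
  (ContinuousLinearMap.proj (R := ℝ) (φ := fun _ : Fin n => ℝ) m).contDiff

theorem smooth_inv_ph (c d : ℝ) :
    ContDiffOn ℝ ∞ (fun s : Pt n => (ph c d s)⁻¹) (Us c d) :=
  ((contDiff_ph c d).contDiffOn).inv fun _ hs => mem_Us hs

theorem smooth_Gam (c d : ℝ) (k i j : Fin n) :
    ContDiffOn ℝ ∞ (Gam c d k i j) (Us c d (n := n)) := by
  unfold Gam
  exact (contDiffOn_const.mul (smooth_inv_ph c d)).mul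
    ((((smooth_coord i).contDiffOn.mul contDiffOn_const).add
      ((smooth_coord j).contDiffOn.mul contDiffOn_const)).sub
      ((smooth_coord k).contDiffOn.mul contDiffOn_const))

/-- Closed form of the partial derivatives of the Christoffel symbols. -/
def pGam (c d : ℝ) (l k i j : Fin n) (t : Pt n) : ℝ :=
  (-2 * c) * (ph c d t)⁻¹ *
    ((if i = l then 1 else 0) * (if j = k then 1 else 0)
      + (if j = l then 1 else 0) * (if i = k then 1 else 0)
      - (if k = l then 1 else 0) * (if i = j then 1 else 0))
  + (t i * (if j = k then 1 else 0) + t j * (if i = k then 1 else 0)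
      - t k * (if i = j then 1 else 0)) * (4 * c ^ 2 * t l) * ((ph c d t) ^ 2)⁻¹

theorem pder_Gam (c d : ℝ) {t : Pt n} (ht : t ∈ Us c d) (l k i j : Fin n) :
    pder l (Gam c d k i j) t = pGam c d l k i j t := by
  have hph : ph c d t ≠ 0 := mem_Us ht
  have hQd : DifferentiableAt ℝ (fun s : Pt n =>
      s i * (if j = k then (1:ℝ) else 0) + s j * (if i = k then (1:ℝ) else 0)
        - s k * (if i = j then (1:ℝ) else 0)) t :=
    (((diff_coord i).mul_const _).add ((diff_coord j).mul_const _)).sub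
      ((diff_coord k).mul_const _)
  have hId : DifferentiableAt ℝ (fun s : Pt n => (ph c d s)⁻¹) t := diff_ph.inv hph
  have hGam : Gam c d k i j = fun s : Pt n => (-2 * c) *
      ((ph c d s)⁻¹ * (s i * (if j = k then (1:ℝ) else 0)
        + s j * (if i = k then (1:ℝ) else 0) - s k * (if i = j then (1:ℝ) else 0))) := by
    funext s; unfold Gam; ring
  rw [hGam, pder_const_mul (hId.fun_mul hQd), pder_mul hId hQd,
    pder_inv diff_ph hph, pder_ph,
    pder_sub (((diff_coord i).mul_const _).fun_add ((diff_coord j).mul_const _))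
      ((diff_coord k).mul_const _),
    pder_add ((diff_coord i).mul_const _) ((diff_coord j).mul_const _),
    pder_mul_const (diff_coord i), pder_mul_const (diff_coord j),
    pder_mul_const (diff_coord k), pder_coord, pder_coord, pder_coord]
  unfold pGam
  field_simp
  ring

/-- The Riemann curvature tensor R^k_{m i j} in closed form. -/
def Rm (c d : ℝ) (k m i j : Fin n) (t : Pt n) : ℝ :=
  pGam c d i k j m t - pGam c d j k i m t
    + ∑ l, (Gam c d k i l t * Gam c d l j m t - Gam c d k j l t * Gam c d l i m t)

end S13

namespace S13

variable {n : ℕ}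

/-- Covariant derivative with the closed-form Christoffel symbols. -/
def cov' (c d : ℝ) (Y Z : VF n) : VF n := fun t k =>
  ∑ i, Y t i * (pder i (fun s => Z s k) t + ∑ m, Gam c d k i m t * Z t m)

theorem covV_eq (c d : ℝ) {t : Pt n} (ht : t ∈ Us c d) (Y Z : VF n) (k : Fin n) :
    covV (met c d) Y Z t k = cov' c d Y Z t k := by
  unfold covV cov'
  refine Finset.sum_congr rfl fun i _ => ?_
  congr 2
  refine Finset.sum_congr rfl fun m _ => ?_
  rw [chr_eq c d (mem_Us ht)]

/-- Smoothness (∞) of a vector field component. -/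
theorem sm {U : Set (Pt n)} {X : VF n} (hX : SmoothVF U X) (k : Fin n) :
    ContDiffOn ℝ ∞ (fun s => X s k) U := (hX k).of_le (by simp)

theorem smooth_cov' (c d : ℝ) {Y Z : VF n} (hY : SmoothVF (Us c d) Y)
    (hZ : SmoothVF (Us c d) Z) (k : Fin n) :
    ContDiffOn ℝ ∞ (fun s => cov' c d Y Z s k) (Us c d) := by
  unfold cov'
  refine ContDiffOn.sum fun i _ => (sm hY i).mul (ContDiffOn.add ?_ ?_)
  · exact pder_smoothOn (isOpen_Us c d) (sm hZ k) i
  · exact ContDiffOn.sum fun m _ => (smooth_Gam c d k i m).mul (sm hZ m)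

section

variable {c d : ℝ} {t : Pt n}

/-- Differentiability of a component of a smooth vector field. -/
theorem dvf (ht : t ∈ Us c d) {X : VF n} (hX : SmoothVF (Us c d) X) (k : Fin n) :
    DifferentiableAt ℝ (fun s => X s k) t :=
  diffAt (isOpen_Us c d) ht (sm hX k) (by norm_cast)

theorem dpd (ht : t ∈ Us c d) {X : VF n} (hX : SmoothVF (Us c d) X) (j k : Fin n) :
    DifferentiableAt ℝ (fun s => pder j (fun s' => X s' k) s) t :=
  diffAt (isOpen_Us c d) ht (pder_smoothOn (isOpen_Us c d) (sm hX k) j) (by norm_cast)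

theorem dG (ht : t ∈ Us c d) (k i m : Fin n) : DifferentiableAt ℝ (Gam c d k i m) t :=
  diffAt (isOpen_Us c d) ht (smooth_Gam c d k i m) (by norm_cast)

/-- Leibniz expansion of the partial derivative of `cov'`. -/
theorem pder_cov' (ht : t ∈ Us c d) {Y Z : VF n} (hY : SmoothVF (Us c d) Y) (hZ : SmoothVF (Us c d) Z)
    (i k : Fin n) :
    pder i (fun s => cov' c d Y Z s k) t
      = ∑ j, (pder i (fun s => Y s j) t
            * (pder j (fun s => Z s k) t + ∑ m, Gam c d k j m t * Z t m)
          + Y t j * (pder i (fun s => pder j (fun s' => Z s' k) s) t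
            + ∑ m, (pder i (Gam c d k j m) t * Z t m
                + Gam c d k j m t * pder i (fun s => Z s m) t))) := by
  have hBd : ∀ j : Fin n, DifferentiableAt ℝ
      (fun s => pder j (fun s' => Z s' k) s + ∑ m, Gam c d k j m s * Z s m) t :=
    fun j => (dpd ht hZ j k).add
      (DifferentiableAt.fun_sum fun m _ => (dG ht k j m).fun_mul (dvf ht hZ m))
  have h0 : (fun s => cov' c d Y Z s k) = fun s =>
      ∑ j, Y s j * (pder j (fun s' => Z s' k) s + ∑ m, Gam c d k j m s * Z s m) := rfl
  rw [h0, pder_sum Finset.univ (fun j _ => (dvf ht hY j).fun_mul (hBd j))]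
  refine Finset.sum_congr rfl fun j _ => ?_
  rw [pder_mul (dvf ht hY j) (hBd j),
    pder_add (dpd ht hZ j k) (DifferentiableAt.fun_sum fun m _ => (dG ht k j m).fun_mul (dvf ht hZ m)),
    pder_sum Finset.univ (fun m _ => (dG ht k j m).fun_mul (dvf ht hZ m))]
  have hpm : ∀ m : Fin n, pder i (fun s => Gam c d k j m s * Z s m) t
      = Gam c d k j m t * pder i (fun s => Z s m) t + Z t m * pder i (Gam c d k j m) t :=
    fun m => pder_mul (dG ht k j m) (dvf ht hZ m) i
  simp only [hpm]
  have hsum2 : ∑ m, (Gam c d k j m t * pder i (fun s => Z s m) t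
        + Z t m * pder i (Gam c d k j m) t)
      = ∑ m, (pder i (Gam c d k j m) t * Z t m
        + Gam c d k j m t * pder i (fun s => Z s m) t) :=
    Finset.sum_congr rfl fun m _ => by ring
  rw [hsum2]
  ring

end

end S13

namespace S13

variable {n : ℕ}

theorem key_alg (x y z : Fin n → ℝ) (px py pz : Fin n → Fin n → ℝ) (z2 : Fin n → Fin n → ℝ)
    (G : Fin n → Fin n → Fin n → ℝ) (pG : Fin n → Fin n → Fin n → Fin n → ℝ) (k : Fin n)
    (hz2 : ∀ i j, z2 i j = z2 j i) :
    (∑ i, x i * ((∑ j, (py i j * (pz j k + ∑ m, G k j m * z m)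
        + y j * (z2 i j + ∑ m, (pG i k j m * z m + G k j m * pz i m))))
      + ∑ m, G k i m * (∑ j, y j * (pz j m + ∑ r, G m j r * z r))))
    - (∑ i, y i * ((∑ j, (px i j * (pz j k + ∑ m, G k j m * z m)
        + x j * (z2 i j + ∑ m, (pG i k j m * z m + G k j m * pz i m))))
      + ∑ m, G k i m * (∑ j, x j * (pz j m + ∑ r, G m j r * z r))))
    - (∑ i, (∑ j, (x j * py j i - y j * px j i)) * (pz i k + ∑ m, G k i m * z m))
    = ∑ i, ∑ j, ∑ m, x i * y j * z m *
        (pG i k j m - pG j k i m + ∑ l, (G k i l * G l j m - G k j l * G l i m)) := by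
  set B : Fin n → ℝ := fun j => pz j k + ∑ m, G k j m * z m with hB
  have step1 :
      (∑ i, x i * ((∑ j, (py i j * B j
          + y j * (z2 i j + ∑ m, (pG i k j m * z m + G k j m * pz i m))))
        + ∑ m, G k i m * (∑ j, y j * (pz j m + ∑ r, G m j r * z r))))
      - (∑ i, y i * ((∑ j, (px i j * B j
          + x j * (z2 i j + ∑ m, (pG i k j m * z m + G k j m * pz i m))))
        + ∑ m, G k i m * (∑ j, x j * (pz j m + ∑ r, G m j r * z r))))
      - (∑ i, (∑ j, (x j * py j i - y j * px j i)) * B i)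
      = ((∑ i, ∑ j, x i * (py i j * B j))
        + (∑ i, ∑ j, x i * (y j * z2 i j))
        + (∑ i, ∑ j, ∑ m, x i * (y j * (pG i k j m * z m)))
        + (∑ i, ∑ j, ∑ m, x i * (y j * (G k j m * pz i m)))
        + (∑ i, ∑ m, ∑ j, x i * (G k i m * (y j * pz j m)))
        + (∑ i, ∑ m, ∑ j, ∑ r, x i * (G k i m * (y j * (G m j r * z r)))))
      - ((∑ i, ∑ j, y i * (px i j * B j))
        + (∑ i, ∑ j, y i * (x j * z2 i j))
        + (∑ i, ∑ j, ∑ m, y i * (x j * (pG i k j m * z m)))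
        + (∑ i, ∑ j, ∑ m, y i * (x j * (G k j m * pz i m)))
        + (∑ i, ∑ m, ∑ j, y i * (G k i m * (x j * pz j m)))
        + (∑ i, ∑ m, ∑ j, ∑ r, y i * (G k i m * (x j * (G m j r * z r)))))
      - ((∑ i, ∑ j, x j * py j i * B i) - (∑ i, ∑ j, y j * px j i * B i)) := by
    simp only [mul_add, Finset.mul_sum, Finset.sum_add_distrib, sub_mul,
      Finset.sum_sub_distrib, Finset.sum_mul]
    ring
  rw [step1]
  have hR : (∑ i, ∑ j, ∑ m, x i * y j * z m *
        (pG i k j m - pG j k i m + ∑ l, (G k i l * G l j m - G k j l * G l i m)))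
      = ((∑ i, ∑ j, ∑ m, x i * y j * z m * pG i k j m)
        - (∑ i, ∑ j, ∑ m, x i * y j * z m * pG j k i m))
        + ((∑ i, ∑ j, ∑ m, ∑ l, x i * y j * z m * (G k i l * G l j m))
          - (∑ i, ∑ j, ∑ m, ∑ l, x i * y j * z m * (G k j l * G l i m))) := by
    simp only [mul_sub, mul_add, Finset.mul_sum, Finset.sum_add_distrib,
      Finset.sum_sub_distrib]
  rw [hR]
  have ha1 : (∑ i, ∑ j, x i * (py i j * B j)) = ∑ i, ∑ j, x j * py j i * B i := by
    rw [Finset.sum_comm]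
    exact Finset.sum_congr rfl fun i _ => Finset.sum_congr rfl fun j _ => by ring
  have hb1 : (∑ i, ∑ j, y i * (px i j * B j)) = ∑ i, ∑ j, y j * px j i * B i := by
    rw [Finset.sum_comm]
    exact Finset.sum_congr rfl fun i _ => Finset.sum_congr rfl fun j _ => by ring
  have hb2 : (∑ i, ∑ j, y i * (x j * z2 i j)) = ∑ i, ∑ j, x i * (y j * z2 i j) := by
    rw [Finset.sum_comm]
    exact Finset.sum_congr rfl fun i _ => Finset.sum_congr rfl fun j _ => by
      rw [hz2 j i]; ring
  have ha3 : (∑ i, ∑ j, ∑ m, x i * (y j * (pG i k j m * z m)))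
      = ∑ i, ∑ j, ∑ m, x i * y j * z m * pG i k j m :=
    Finset.sum_congr rfl fun i _ => Finset.sum_congr rfl fun j _ =>
      Finset.sum_congr rfl fun m _ => by ring
  have hb3 : (∑ i, ∑ j, ∑ m, y i * (x j * (pG i k j m * z m)))
      = ∑ i, ∑ j, ∑ m, x i * y j * z m * pG j k i m := by
    rw [Finset.sum_comm]
    exact Finset.sum_congr rfl fun i _ => Finset.sum_congr rfl fun j _ =>
      Finset.sum_congr rfl fun m _ => by ring
  have ha4 : (∑ i, ∑ j, ∑ m, x i * (y j * (G k j m * pz i m)))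
      = ∑ i, ∑ j, ∑ m, x i * y j * G k j m * pz i m :=
    Finset.sum_congr rfl fun i _ => Finset.sum_congr rfl fun j _ =>
      Finset.sum_congr rfl fun m _ => by ring
  have hb4 : (∑ i, ∑ j, ∑ m, y i * (x j * (G k j m * pz i m)))
      = ∑ i, ∑ j, ∑ m, x i * y j * G k i m * pz j m := by
    rw [Finset.sum_comm]
    exact Finset.sum_congr rfl fun i _ => Finset.sum_congr rfl fun j _ =>
      Finset.sum_congr rfl fun m _ => by ring
  have ha5 : (∑ i, ∑ m, ∑ j, x i * (G k i m * (y j * pz j m)))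
      = ∑ i, ∑ j, ∑ m, x i * y j * G k i m * pz j m := by
    refine Finset.sum_congr rfl fun i _ => ?_
    rw [Finset.sum_comm]
    exact Finset.sum_congr rfl fun j _ => Finset.sum_congr rfl fun m _ => by ring
  have hb5 : (∑ i, ∑ m, ∑ j, y i * (G k i m * (x j * pz j m)))
      = ∑ i, ∑ j, ∑ m, x i * y j * G k j m * pz i m := by
    calc (∑ i, ∑ m, ∑ j, y i * (G k i m * (x j * pz j m)))
        = ∑ i, ∑ j, ∑ m, y i * (G k i m * (x j * pz j m)) :=
          Finset.sum_congr rfl fun i _ => Finset.sum_comm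
      _ = ∑ i, ∑ j, ∑ m, y j * (G k j m * (x i * pz i m)) := Finset.sum_comm
      _ = ∑ i, ∑ j, ∑ m, x i * y j * G k j m * pz i m :=
          Finset.sum_congr rfl fun i _ => Finset.sum_congr rfl fun j _ =>
            Finset.sum_congr rfl fun m _ => by ring
  have ha6 : (∑ i, ∑ m, ∑ j, ∑ r, x i * (G k i m * (y j * (G m j r * z r))))
      = ∑ i, ∑ j, ∑ m, ∑ l, x i * y j * z m * (G k i l * G l j m) := by
    refine Finset.sum_congr rfl fun i _ => ?_
    rw [Finset.sum_comm]
    refine Finset.sum_congr rfl fun j _ => ?_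
    rw [Finset.sum_comm]
    exact Finset.sum_congr rfl fun m _ => Finset.sum_congr rfl fun l _ => by ring
  have hb6 : (∑ i, ∑ m, ∑ j, ∑ r, y i * (G k i m * (x j * (G m j r * z r))))
      = ∑ i, ∑ j, ∑ m, ∑ l, x i * y j * z m * (G k j l * G l i m) := by
    calc (∑ i, ∑ m, ∑ j, ∑ r, y i * (G k i m * (x j * (G m j r * z r))))
        = ∑ i, ∑ j, ∑ m, ∑ r, y i * (G k i m * (x j * (G m j r * z r))) :=
          Finset.sum_congr rfl fun i _ => Finset.sum_comm
      _ = ∑ i, ∑ j, ∑ m, ∑ r, y j * (G k j m * (x i * (G m i r * z r))) := Finset.sum_comm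
      _ = ∑ i, ∑ j, ∑ m, ∑ l, y j * (G k j l * (x i * (G l i m * z m))) :=
          Finset.sum_congr rfl fun i _ => Finset.sum_congr rfl fun j _ => Finset.sum_comm
      _ = ∑ i, ∑ j, ∑ m, ∑ l, x i * y j * z m * (G k j l * G l i m) :=
          Finset.sum_congr rfl fun i _ => Finset.sum_congr rfl fun j _ =>
            Finset.sum_congr rfl fun m _ => Finset.sum_congr rfl fun l _ => by ring
  rw [ha1, hb1, hb2, ha3, hb3, ha4, hb4, ha5, hb5, ha6, hb6]
  ring

end S13

namespace S13

variable {n : ℕ}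

theorem curv_eq (c d : ℝ) {X Y Z : VF n} (hX : SmoothVF (Us c d) X)
    (hY : SmoothVF (Us c d) Y) (hZ : SmoothVF (Us c d) Z)
    {t : Pt n} (ht : t ∈ Us c d) (k : Fin n) :
    curvV (met c d) X Y Z t k = ∑ i, ∑ j, ∑ m, X t i * Y t j * Z t m *
      (pder i (Gam c d k j m) t - pder j (Gam c d k i m) t
        + ∑ l, (Gam c d k i l t * Gam c d l j m t - Gam c d k j l t * Gam c d l i m t)) := by
  have hU := isOpen_Us (n := n) c d
  have h1 : covV (met c d) X (covV (met c d) Y Z) t k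
      = ∑ i, X t i * (pder i (fun s => cov' c d Y Z s k) t
          + ∑ m, Gam c d k i m t * cov' c d Y Z t m) := by
    rw [covV_eq c d ht]
    refine Finset.sum_congr rfl fun i _ => ?_
    rw [pder_congr hU ht (fun s hs => covV_eq c d hs Y Z k) i]
    have : ∑ m, Gam c d k i m t * covV (met c d) Y Z t m
        = ∑ m, Gam c d k i m t * cov' c d Y Z t m :=
      Finset.sum_congr rfl fun m _ => by rw [covV_eq c d ht]
    rw [this]
  have h2 : covV (met c d) Y (covV (met c d) X Z) t k
      = ∑ i, Y t i * (pder i (fun s => cov' c d X Z s k) t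
          + ∑ m, Gam c d k i m t * cov' c d X Z t m) := by
    rw [covV_eq c d ht]
    refine Finset.sum_congr rfl fun i _ => ?_
    rw [pder_congr hU ht (fun s hs => covV_eq c d hs X Z k) i]
    have : ∑ m, Gam c d k i m t * covV (met c d) X Z t m
        = ∑ m, Gam c d k i m t * cov' c d X Z t m :=
      Finset.sum_congr rfl fun m _ => by rw [covV_eq c d ht]
    rw [this]
  have h3 : covV (met c d) (vbr X Y) Z t k
      = ∑ i, (∑ j, (X t j * pder j (fun s => Y s i) t - Y t j * pder j (fun s => X s i) t))
          * (pder i (fun s => Z s k) t + ∑ m, Gam c d k i m t * Z t m) :=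
    covV_eq c d ht (vbr X Y) Z k
  show covV (met c d) X (covV (met c d) Y Z) t k - covV (met c d) Y (covV (met c d) X Z) t k
      - covV (met c d) (vbr X Y) Z t k = _
  rw [h1, h2, h3]
  simp only [pder_cov' ht hY hZ, pder_cov' ht hX hZ]
  have hz2 : ∀ i j : Fin n, pder i (fun s => pder j (fun s' => Z s' k) s) t
      = pder j (fun s => pder i (fun s' => Z s' k) s) t :=
    fun i j => pder_comm hU ht (sm hZ k) i j
  exact key_alg (X t) (Y t) (Z t)
    (fun i j => pder i (fun s => X s j) t) (fun i j => pder i (fun s => Y s j) t)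
    (fun i j => pder i (fun s => Z s j) t)
    (fun i j => pder i (fun s => pder j (fun s' => Z s' k) s) t)
    (fun a b e => Gam c d a b e t)
    (fun i a j m => pder i (Gam c d a j m) t) k hz2

end S13


namespace S13

variable {n : ℕ}

/-- ∑_l t_l Γ^p_{il} = w T δ_{ip}. -/
theorem TsumGam (c d : ℝ) (t : Pt n) (p i : Fin n) :
    ∑ l, t l * Gam c d p i l t
      = (-2 * c) * (ph c d t)⁻¹ * (∑ l, t l * t l) * (if i = p then 1 else 0) := by
  have hb : ∀ l, t l * Gam c d p i l t
      = (if l = p then (-2 * c) * (ph c d t)⁻¹ * (t i * t l) else 0)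
        + ((-2 * c) * (ph c d t)⁻¹ * (t l * t l)) * (if i = p then 1 else 0)
        - (if i = l then (-2 * c) * (ph c d t)⁻¹ * (t p * t l) else 0) := by
    intro l
    simp only [Gam]
    split_ifs <;> ring
  simp only [hb]
  rw [Finset.sum_sub_distrib, Finset.sum_add_distrib, Finset.sum_ite_eq' Finset.univ p,
    Finset.sum_ite_eq Finset.univ i, ← Finset.sum_mul, ← Finset.mul_sum]
  simp only [Finset.mem_univ, if_true]
  split_ifs <;> ring

set_option maxHeartbeats 1000000 in
/-- ∑_l Γ^p_{il} Γ^l_{jm} in closed form. -/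
theorem GG (c d : ℝ) (t : Pt n) (p i j m : Fin n) :
    ∑ l, Gam c d p i l t * Gam c d l j m t
      = (-2 * c) * (ph c d t)⁻¹ * (t j * Gam c d p i m t + t m * Gam c d p i j t)
        - ((-2 * c) * (ph c d t)⁻¹) ^ 2 * (∑ l, t l * t l)
          * ((if j = m then 1 else 0) * (if i = p then 1 else 0)) := by
  have hb : ∀ l, Gam c d p i l t * Gam c d l j m t
      = (if m = l then (-2 * c) * (ph c d t)⁻¹ * t j * Gam c d p i l t else 0)
        + (if j = l then (-2 * c) * (ph c d t)⁻¹ * t m * Gam c d p i l t else 0)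
        - (if j = m then 1 else 0) * ((-2 * c) * (ph c d t)⁻¹ * (t l * Gam c d p i l t)) := by
    intro l
    simp only [Gam]
    split_ifs <;> ring
  simp only [hb]
  rw [Finset.sum_sub_distrib, Finset.sum_add_distrib, Finset.sum_ite_eq Finset.univ m,
    Finset.sum_ite_eq Finset.univ j, ← Finset.mul_sum]
  simp only [Finset.mem_univ, if_true]
  rw [← Finset.mul_sum, TsumGam]
  ring

end S13

namespace S13

variable {n : ℕ}

section
variable (c d : ℝ) (t : Pt n) (u v z w : Fin n → ℝ)

/-- Innermost contraction of Γ against a vector. -/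
theorem Minner (p i : Fin n) :
    ∑ m, z m * Gam c d p i m t
      = (-2 * c) * (ph c d t)⁻¹ * (t i * z p + (∑ a, t a * z a) * (if i = p then 1 else 0)
          - t p * z i) := by
  have hb : ∀ m, z m * Gam c d p i m t
      = (if m = p then (-2 * c) * (ph c d t)⁻¹ * (t i * z m) else 0)
        + (t m * z m) * ((-2 * c) * (ph c d t)⁻¹ * (if i = p then 1 else 0))
        - (if i = m then (-2 * c) * (ph c d t)⁻¹ * (t p * z m) else 0) := by
    intro m
    simp only [Gam]
    split_ifs <;> ring
  simp only [hb]
  rw [Finset.sum_sub_distrib, Finset.sum_add_distrib, Finset.sum_ite_eq' Finset.univ p,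
    Finset.sum_ite_eq Finset.univ i, ← Finset.sum_mul]
  simp only [Finset.mem_univ, if_true]
  ring

/-- Triple contraction of Γ. -/
theorem G3 :
    ∑ p, ∑ i, ∑ m, u p * v i * z m * Gam c d p i m t
      = (-2 * c) * (ph c d t)⁻¹ *
          ((∑ a, t a * v a) * (∑ a, u a * z a) + (∑ a, t a * z a) * (∑ a, u a * v a)
            - (∑ a, t a * u a) * (∑ a, v a * z a)) := by
  have h1 : ∀ p i : Fin n, ∑ m, u p * v i * z m * Gam c d p i m t
      = u p * v i * ∑ m, z m * Gam c d p i m t := by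
    intro p i
    rw [Finset.mul_sum]
    exact Finset.sum_congr rfl fun m _ => by ring
  simp only [h1, Minner c d t z]
  have h2 : ∀ p : Fin n, ∑ i, u p * v i * ((-2 * c) * (ph c d t)⁻¹
        * (t i * z p + (∑ a, t a * z a) * (if i = p then 1 else 0) - t p * z i))
      = (u p * z p) * ((-2 * c) * (ph c d t)⁻¹ * (∑ a, t a * v a))
        + (u p * v p) * ((-2 * c) * (ph c d t)⁻¹ * (∑ a, t a * z a))
        - (t p * u p) * ((-2 * c) * (ph c d t)⁻¹ * (∑ a, v a * z a)) := by
    intro p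
    have hb2 : ∀ i, u p * v i * ((-2 * c) * (ph c d t)⁻¹
          * (t i * z p + (∑ a, t a * z a) * (if i = p then 1 else 0) - t p * z i))
        = (t i * v i) * ((-2 * c) * (ph c d t)⁻¹ * (u p * z p))
          + (if i = p then (-2 * c) * (ph c d t)⁻¹ * ((∑ a, t a * z a) * (u p * v i)) else 0)
          - (v i * z i) * ((-2 * c) * (ph c d t)⁻¹ * (t p * u p)) := by
      intro i; split_ifs <;> ring
    simp only [hb2]
    rw [Finset.sum_sub_distrib, Finset.sum_add_distrib, Finset.sum_ite_eq' Finset.univ p,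
      ← Finset.sum_mul, ← Finset.sum_mul]
    simp only [Finset.mem_univ, if_true]
    ring
  simp only [h2]
  rw [Finset.sum_sub_distrib, Finset.sum_add_distrib, ← Finset.sum_mul, ← Finset.sum_mul,
    ← Finset.sum_mul]
  ring

set_option maxHeartbeats 1000000 in
/-- Quadruple contraction of ∂Γ. -/
theorem P4 :
    ∑ p, ∑ i, ∑ j, ∑ m, u p * v i * z j * w m * pGam c d i p j m t
      = (-2 * c) * (ph c d t)⁻¹ * ((∑ a, v a * z a) * (∑ a, u a * w a)
          + (∑ a, u a * z a) * (∑ a, v a * w a) - (∑ a, z a * w a) * (∑ a, u a * v a))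
        + (4 * c ^ 2) * ((ph c d t) ^ 2)⁻¹ * (∑ a, t a * v a) *
          ((∑ a, t a * z a) * (∑ a, u a * w a) + (∑ a, t a * w a) * (∑ a, u a * z a)
            - (∑ a, t a * u a) * (∑ a, z a * w a)) := by
  have st1 : ∀ p i j : Fin n, ∑ m, u p * v i * z j * w m * pGam c d i p j m t
      = u p * v i * z j * (
          w p * ((-2 * c) * (ph c d t)⁻¹ * (if j = i then 1 else 0)
            + t j * ((4 * c ^ 2 * t i) * ((ph c d t) ^ 2)⁻¹))
        + w i * ((-2 * c) * (ph c d t)⁻¹ * (if j = p then 1 else 0))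
        + (∑ a, t a * w a) * ((if j = p then 1 else 0) * ((4 * c ^ 2 * t i) * ((ph c d t) ^ 2)⁻¹))
        - w j * ((-2 * c) * (ph c d t)⁻¹ * (if p = i then 1 else 0)
            + t p * ((4 * c ^ 2 * t i) * ((ph c d t) ^ 2)⁻¹))) := by
    intro p i j
    have hb : ∀ m, u p * v i * z j * w m * pGam c d i p j m t
        = (if m = p then (u p * v i * z j * w m) * ((-2 * c) * (ph c d t)⁻¹
              * (if j = i then 1 else 0)
              + t j * ((4 * c ^ 2 * t i) * ((ph c d t) ^ 2)⁻¹)) else 0)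
          + (if m = i then (u p * v i * z j * w m) * ((-2 * c) * (ph c d t)⁻¹
              * (if j = p then 1 else 0)) else 0)
          + (t m * w m) * ((u p * v i * z j)
              * ((if j = p then 1 else 0) * ((4 * c ^ 2 * t i) * ((ph c d t) ^ 2)⁻¹)))
          - (if j = m then (u p * v i * z j * w m) * ((-2 * c) * (ph c d t)⁻¹
              * (if p = i then 1 else 0)
              + t p * ((4 * c ^ 2 * t i) * ((ph c d t) ^ 2)⁻¹)) else 0) := by
      intro m
      simp only [pGam]
      split_ifs <;> ring
    simp only [hb]
    rw [Finset.sum_sub_distrib, Finset.sum_add_distrib, Finset.sum_add_distrib,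
      Finset.sum_ite_eq' Finset.univ p, Finset.sum_ite_eq' Finset.univ i,
      Finset.sum_ite_eq Finset.univ j, ← Finset.sum_mul]
    simp only [Finset.mem_univ, if_true]
    split_ifs <;> ring
  have st2 : ∀ p i : Fin n, (∑ j, u p * v i * z j * (
          w p * ((-2 * c) * (ph c d t)⁻¹ * (if j = i then 1 else 0)
            + t j * ((4 * c ^ 2 * t i) * ((ph c d t) ^ 2)⁻¹))
        + w i * ((-2 * c) * (ph c d t)⁻¹ * (if j = p then 1 else 0))
        + (∑ a, t a * w a) * ((if j = p then 1 else 0) * ((4 * c ^ 2 * t i) * ((ph c d t) ^ 2)⁻¹))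
        - w j * ((-2 * c) * (ph c d t)⁻¹ * (if p = i then 1 else 0)
            + t p * ((4 * c ^ 2 * t i) * ((ph c d t) ^ 2)⁻¹))))
      = u p * v i * (
          z i * (w p * ((-2 * c) * (ph c d t)⁻¹))
        + (∑ a, t a * z a) * (w p * ((4 * c ^ 2 * t i) * ((ph c d t) ^ 2)⁻¹))
        + z p * (w i * ((-2 * c) * (ph c d t)⁻¹))
        + z p * ((∑ a, t a * w a) * ((4 * c ^ 2 * t i) * ((ph c d t) ^ 2)⁻¹))
        - (∑ a, z a * w a) * ((-2 * c) * (ph c d t)⁻¹ * (if p = i then 1 else 0))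
        - (∑ a, z a * w a) * (t p * ((4 * c ^ 2 * t i) * ((ph c d t) ^ 2)⁻¹))) := by
    intro p i
    have hb : ∀ j, u p * v i * z j * (
          w p * ((-2 * c) * (ph c d t)⁻¹ * (if j = i then 1 else 0)
            + t j * ((4 * c ^ 2 * t i) * ((ph c d t) ^ 2)⁻¹))
        + w i * ((-2 * c) * (ph c d t)⁻¹ * (if j = p then 1 else 0))
        + (∑ a, t a * w a) * ((if j = p then 1 else 0) * ((4 * c ^ 2 * t i) * ((ph c d t) ^ 2)⁻¹))
        - w j * ((-2 * c) * (ph c d t)⁻¹ * (if p = i then 1 else 0)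
            + t p * ((4 * c ^ 2 * t i) * ((ph c d t) ^ 2)⁻¹)))
        = (if j = i then (u p * v i) * (z j * (w p * ((-2 * c) * (ph c d t)⁻¹))) else 0)
          + (t j * z j) * ((u p * v i) * (w p * ((4 * c ^ 2 * t i) * ((ph c d t) ^ 2)⁻¹)))
          + (if j = p then (u p * v i) * (z j * (w i * ((-2 * c) * (ph c d t)⁻¹))
              + z j * ((∑ a, t a * w a) * ((4 * c ^ 2 * t i) * ((ph c d t) ^ 2)⁻¹))) else 0)
          - (z j * w j) * ((u p * v i) * ((-2 * c) * (ph c d t)⁻¹ * (if p = i then 1 else 0)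
              + t p * ((4 * c ^ 2 * t i) * ((ph c d t) ^ 2)⁻¹))) := by
      intro j; split_ifs <;> ring
    simp only [hb]
    rw [Finset.sum_sub_distrib, Finset.sum_add_distrib, Finset.sum_add_distrib,
      Finset.sum_ite_eq' Finset.univ i, Finset.sum_ite_eq' Finset.univ p,
      ← Finset.sum_mul, ← Finset.sum_mul]
    simp only [Finset.mem_univ, if_true]
    split_ifs <;> ring
  have st3 : ∀ p : Fin n, (∑ i, u p * v i * (
          z i * (w p * ((-2 * c) * (ph c d t)⁻¹))
        + (∑ a, t a * z a) * (w p * ((4 * c ^ 2 * t i) * ((ph c d t) ^ 2)⁻¹))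
        + z p * (w i * ((-2 * c) * (ph c d t)⁻¹))
        + z p * ((∑ a, t a * w a) * ((4 * c ^ 2 * t i) * ((ph c d t) ^ 2)⁻¹))
        - (∑ a, z a * w a) * ((-2 * c) * (ph c d t)⁻¹ * (if p = i then 1 else 0))
        - (∑ a, z a * w a) * (t p * ((4 * c ^ 2 * t i) * ((ph c d t) ^ 2)⁻¹))))
      = u p * (
          (∑ a, v a * z a) * (w p * ((-2 * c) * (ph c d t)⁻¹))
        + (∑ a, t a * z a) * (w p * ((∑ a, t a * v a) * (4 * c ^ 2) * ((ph c d t) ^ 2)⁻¹))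
        + z p * ((∑ a, v a * w a) * ((-2 * c) * (ph c d t)⁻¹))
        + z p * ((∑ a, t a * w a) * ((∑ a, t a * v a) * (4 * c ^ 2) * ((ph c d t) ^ 2)⁻¹))
        - (∑ a, z a * w a) * (v p * ((-2 * c) * (ph c d t)⁻¹))
        - (∑ a, z a * w a) * (t p * ((∑ a, t a * v a) * (4 * c ^ 2) * ((ph c d t) ^ 2)⁻¹))) := by
    intro p
    have hb : ∀ i, u p * v i * (
          z i * (w p * ((-2 * c) * (ph c d t)⁻¹))
        + (∑ a, t a * z a) * (w p * ((4 * c ^ 2 * t i) * ((ph c d t) ^ 2)⁻¹))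
        + z p * (w i * ((-2 * c) * (ph c d t)⁻¹))
        + z p * ((∑ a, t a * w a) * ((4 * c ^ 2 * t i) * ((ph c d t) ^ 2)⁻¹))
        - (∑ a, z a * w a) * ((-2 * c) * (ph c d t)⁻¹ * (if p = i then 1 else 0))
        - (∑ a, z a * w a) * (t p * ((4 * c ^ 2 * t i) * ((ph c d t) ^ 2)⁻¹)))
        = (v i * z i) * (u p * (w p * ((-2 * c) * (ph c d t)⁻¹)))
          + (t i * v i) * (u p * ((∑ a, t a * z a) * (w p * ((4 * c ^ 2) * ((ph c d t) ^ 2)⁻¹))))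
          + (v i * w i) * (u p * (z p * ((-2 * c) * (ph c d t)⁻¹)))
          + (t i * v i) * (u p * (z p * ((∑ a, t a * w a) * ((4 * c ^ 2) * ((ph c d t) ^ 2)⁻¹))))
          - (if p = i then (u p * v i) * ((∑ a, z a * w a) * ((-2 * c) * (ph c d t)⁻¹)) else 0)
          - (t i * v i) * (u p * ((∑ a, z a * w a) * (t p * ((4 * c ^ 2) * ((ph c d t) ^ 2)⁻¹)))) := by
      intro i; split_ifs <;> ring
    simp only [hb]
    rw [Finset.sum_sub_distrib, Finset.sum_sub_distrib, Finset.sum_add_distrib,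
      Finset.sum_add_distrib, Finset.sum_add_distrib,
      Finset.sum_ite_eq Finset.univ p,
      ← Finset.sum_mul, ← Finset.sum_mul, ← Finset.sum_mul, ← Finset.sum_mul, ← Finset.sum_mul]
    simp only [Finset.mem_univ, if_true]
    ring
  calc ∑ p, ∑ i, ∑ j, ∑ m, u p * v i * z j * w m * pGam c d i p j m t
      = ∑ p, ∑ i, ∑ j, u p * v i * z j * (
          w p * ((-2 * c) * (ph c d t)⁻¹ * (if j = i then 1 else 0)
            + t j * ((4 * c ^ 2 * t i) * ((ph c d t) ^ 2)⁻¹))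
        + w i * ((-2 * c) * (ph c d t)⁻¹ * (if j = p then 1 else 0))
        + (∑ a, t a * w a) * ((if j = p then 1 else 0) * ((4 * c ^ 2 * t i) * ((ph c d t) ^ 2)⁻¹))
        - w j * ((-2 * c) * (ph c d t)⁻¹ * (if p = i then 1 else 0)
            + t p * ((4 * c ^ 2 * t i) * ((ph c d t) ^ 2)⁻¹))) :=
        Finset.sum_congr rfl fun p _ => Finset.sum_congr rfl fun i _ =>
          Finset.sum_congr rfl fun j _ => st1 p i j
    _ = ∑ p, ∑ i, u p * v i * (
          z i * (w p * ((-2 * c) * (ph c d t)⁻¹))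
        + (∑ a, t a * z a) * (w p * ((4 * c ^ 2 * t i) * ((ph c d t) ^ 2)⁻¹))
        + z p * (w i * ((-2 * c) * (ph c d t)⁻¹))
        + z p * ((∑ a, t a * w a) * ((4 * c ^ 2 * t i) * ((ph c d t) ^ 2)⁻¹))
        - (∑ a, z a * w a) * ((-2 * c) * (ph c d t)⁻¹ * (if p = i then 1 else 0))
        - (∑ a, z a * w a) * (t p * ((4 * c ^ 2 * t i) * ((ph c d t) ^ 2)⁻¹))) :=
        Finset.sum_congr rfl fun p _ => Finset.sum_congr rfl fun i _ => st2 p i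
    _ = ∑ p, u p * (
          (∑ a, v a * z a) * (w p * ((-2 * c) * (ph c d t)⁻¹))
        + (∑ a, t a * z a) * (w p * ((∑ a, t a * v a) * (4 * c ^ 2) * ((ph c d t) ^ 2)⁻¹))
        + z p * ((∑ a, v a * w a) * ((-2 * c) * (ph c d t)⁻¹))
        + z p * ((∑ a, t a * w a) * ((∑ a, t a * v a) * (4 * c ^ 2) * ((ph c d t) ^ 2)⁻¹))
        - (∑ a, z a * w a) * (v p * ((-2 * c) * (ph c d t)⁻¹))
        - (∑ a, z a * w a) * (t p * ((∑ a, t a * v a) * (4 * c ^ 2) * ((ph c d t) ^ 2)⁻¹))) :=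
        Finset.sum_congr rfl fun p _ => st3 p
    _ = _ := by
        have hb : ∀ p, u p * (
            (∑ a, v a * z a) * (w p * ((-2 * c) * (ph c d t)⁻¹))
          + (∑ a, t a * z a) * (w p * ((∑ a, t a * v a) * (4 * c ^ 2) * ((ph c d t) ^ 2)⁻¹))
          + z p * ((∑ a, v a * w a) * ((-2 * c) * (ph c d t)⁻¹))
          + z p * ((∑ a, t a * w a) * ((∑ a, t a * v a) * (4 * c ^ 2) * ((ph c d t) ^ 2)⁻¹))
          - (∑ a, z a * w a) * (v p * ((-2 * c) * (ph c d t)⁻¹))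
          - (∑ a, z a * w a) * (t p * ((∑ a, t a * v a) * (4 * c ^ 2) * ((ph c d t) ^ 2)⁻¹)))
            = (u p * w p) * ((∑ a, v a * z a) * ((-2 * c) * (ph c d t)⁻¹)
                + (∑ a, t a * z a) * ((∑ a, t a * v a) * (4 * c ^ 2) * ((ph c d t) ^ 2)⁻¹))
              + (u p * z p) * ((∑ a, v a * w a) * ((-2 * c) * (ph c d t)⁻¹)
                + (∑ a, t a * w a) * ((∑ a, t a * v a) * (4 * c ^ 2) * ((ph c d t) ^ 2)⁻¹))
              - (u p * v p) * ((∑ a, z a * w a) * ((-2 * c) * (ph c d t)⁻¹))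
              - (t p * u p) * ((∑ a, z a * w a) * ((∑ a, t a * v a) * (4 * c ^ 2)
                  * ((ph c d t) ^ 2)⁻¹)) := fun p => by ring
        simp only [hb]
        rw [Finset.sum_sub_distrib, Finset.sum_sub_distrib, Finset.sum_add_distrib,
          ← Finset.sum_mul, ← Finset.sum_mul, ← Finset.sum_mul, ← Finset.sum_mul]
        ring

end

end S13

namespace S13

variable {n : ℕ}

section
variable (c d : ℝ) (t : Pt n) (u v z w : Fin n → ℝ)

/-- δδ collapse, pairing (j,m) and (i,p). -/
theorem DD : ∑ p, ∑ i, ∑ j, ∑ m, u p * v i * z j * w m *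
      ((if j = m then 1 else 0) * (if i = p then 1 else 0))
    = (∑ a, u a * v a) * (∑ a, z a * w a) := by
  have h1 : ∀ p i j : Fin n, ∑ m, u p * v i * z j * w m *
        ((if j = m then 1 else 0) * (if i = p then 1 else 0))
      = (z j * w j) * ((u p * v i) * (if i = p then 1 else 0)) := by
    intro p i j
    have hb : ∀ m, u p * v i * z j * w m * ((if j = m then 1 else 0) * (if i = p then 1 else 0))
        = (if j = m then (z j * w m) * ((u p * v i) * (if i = p then 1 else 0)) else 0) := by
      intro m; split_ifs <;> ring
    simp only [hb]
    rw [Finset.sum_ite_eq Finset.univ j]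
    simp
  simp only [h1]
  have h2 : ∀ p i : Fin n, ∑ j, (z j * w j) * ((u p * v i) * (if i = p then 1 else 0))
      = (∑ a, z a * w a) * ((u p * v i) * (if i = p then 1 else 0)) := fun p i => by
    rw [← Finset.sum_mul]
  simp only [h2]
  have h3 : ∀ p : Fin n, ∑ i, (∑ a, z a * w a) * ((u p * v i) * (if i = p then 1 else 0))
      = (u p * v p) * (∑ a, z a * w a) := by
    intro p
    have hb : ∀ i, (∑ a, z a * w a) * ((u p * v i) * (if i = p then 1 else 0))
        = (if i = p then (u p * v i) * (∑ a, z a * w a) else 0) := by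
      intro i; split_ifs <;> ring
    simp only [hb]
    rw [Finset.sum_ite_eq' Finset.univ p]
    simp
  simp only [h3]
  rw [← Finset.sum_mul]

/-- δδ collapse, pairing (i,m) and (j,p). -/
theorem DD2 : ∑ p, ∑ i, ∑ j, ∑ m, u p * v i * z j * w m *
      ((if i = m then 1 else 0) * (if j = p then 1 else 0))
    = (∑ a, u a * z a) * (∑ a, v a * w a) := by
  have h1 : ∀ p i j : Fin n, ∑ m, u p * v i * z j * w m *
        ((if i = m then 1 else 0) * (if j = p then 1 else 0))
      = (v i * w i) * ((u p * z j) * (if j = p then 1 else 0)) := by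
    intro p i j
    have hb : ∀ m, u p * v i * z j * w m * ((if i = m then 1 else 0) * (if j = p then 1 else 0))
        = (if i = m then (v i * w m) * ((u p * z j) * (if j = p then 1 else 0)) else 0) := by
      intro m; split_ifs <;> ring
    simp only [hb]
    rw [Finset.sum_ite_eq Finset.univ i]
    simp
  simp only [h1]
  have h2 : ∀ p i : Fin n, ∑ j, (v i * w i) * ((u p * z j) * (if j = p then 1 else 0))
      = (v i * w i) * (u p * z p) := by
    intro p i
    have hb : ∀ j, (v i * w i) * ((u p * z j) * (if j = p then 1 else 0))
        = (if j = p then (u p * z j) * (v i * w i) else 0) := by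
      intro j; split_ifs <;> ring
    simp only [hb]
    rw [Finset.sum_ite_eq' Finset.univ p]
    simp [mul_comm]
  simp only [h2]
  have h3 : ∀ p : Fin n, ∑ i, (v i * w i) * (u p * z p)
      = (u p * z p) * (∑ a, v a * w a) := fun p => by
    rw [← Finset.sum_mul]; ring
  simp only [h3]
  rw [← Finset.sum_mul]

end

end S13

namespace S13

variable {n : ℕ}

set_option maxHeartbeats 1000000 in
theorem contract (c d : ℝ) (t : Pt n) (x y : Fin n → ℝ) :
    (∑ p, ∑ i, ∑ j, ∑ m, x p * x i * y j * y m *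
      (pGam c d i p j m t - pGam c d j p i m t
        + ∑ l, (Gam c d p i l t * Gam c d l j m t - Gam c d p j l t * Gam c d l i m t)))
    = (4 * c * (ph c d t)⁻¹ - 4 * c ^ 2 * (∑ a, t a * t a) * ((ph c d t)⁻¹) ^ 2)
        * ((∑ a, x a * x a) * (∑ a, y a * y a) - (∑ a, x a * y a) ^ 2) := by
  have step1 : (∑ p, ∑ i, ∑ j, ∑ m, x p * x i * y j * y m *
      (pGam c d i p j m t - pGam c d j p i m t
        + ∑ l, (Gam c d p i l t * Gam c d l j m t - Gam c d p j l t * Gam c d l i m t)))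
      = (∑ p, ∑ i, ∑ j, ∑ m, x p * x i * y j * y m * pGam c d i p j m t)
        - (∑ p, ∑ i, ∑ j, ∑ m, x p * x i * y j * y m * pGam c d j p i m t)
        + (((∑ p, ∑ i, ∑ j, ∑ m, x p * x i * y j * y m *
              ((-2 * c) * (ph c d t)⁻¹ * (t j * Gam c d p i m t)))
            + (∑ p, ∑ i, ∑ j, ∑ m, x p * x i * y j * y m *
              ((-2 * c) * (ph c d t)⁻¹ * (t m * Gam c d p i j t))))
          - ((-2 * c) * (ph c d t)⁻¹) ^ 2 * (∑ a, t a * t a) *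
            (∑ p, ∑ i, ∑ j, ∑ m, x p * x i * y j * y m *
              ((if j = m then 1 else 0) * (if i = p then 1 else 0))))
        - (((∑ p, ∑ i, ∑ j, ∑ m, x p * x i * y j * y m *
              ((-2 * c) * (ph c d t)⁻¹ * (t i * Gam c d p j m t)))
            + (∑ p, ∑ i, ∑ j, ∑ m, x p * x i * y j * y m *
              ((-2 * c) * (ph c d t)⁻¹ * (t m * Gam c d p j i t))))
          - ((-2 * c) * (ph c d t)⁻¹) ^ 2 * (∑ a, t a * t a) *
            (∑ p, ∑ i, ∑ j, ∑ m, x p * x i * y j * y m *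
              ((if i = m then 1 else 0) * (if j = p then 1 else 0)))) := by
    have hbody : ∀ p i j m : Fin n, x p * x i * y j * y m *
        (pGam c d i p j m t - pGam c d j p i m t
          + ∑ l, (Gam c d p i l t * Gam c d l j m t - Gam c d p j l t * Gam c d l i m t))
        = x p * x i * y j * y m * pGam c d i p j m t
          - x p * x i * y j * y m * pGam c d j p i m t
          + ((x p * x i * y j * y m * ((-2 * c) * (ph c d t)⁻¹ * (t j * Gam c d p i m t))
              + x p * x i * y j * y m * ((-2 * c) * (ph c d t)⁻¹ * (t m * Gam c d p i j t)))
            - ((-2 * c) * (ph c d t)⁻¹) ^ 2 * (∑ a, t a * t a) *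
              (x p * x i * y j * y m * ((if j = m then 1 else 0) * (if i = p then 1 else 0))))
          - ((x p * x i * y j * y m * ((-2 * c) * (ph c d t)⁻¹ * (t i * Gam c d p j m t))
              + x p * x i * y j * y m * ((-2 * c) * (ph c d t)⁻¹ * (t m * Gam c d p j i t)))
            - ((-2 * c) * (ph c d t)⁻¹) ^ 2 * (∑ a, t a * t a) *
              (x p * x i * y j * y m * ((if i = m then 1 else 0) * (if j = p then 1 else 0)))) := by
      intro p i j m
      rw [Finset.sum_sub_distrib, GG c d t p i j m, GG c d t p j i m]
      ring
    simp only [hbody]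
    simp only [Finset.sum_add_distrib, Finset.sum_sub_distrib, ← Finset.mul_sum]
  rw [step1, P4 c d t x x y y, DD, DD2]
  -- E2
  have hE2 : (∑ p, ∑ i, ∑ j, ∑ m, x p * x i * y j * y m * pGam c d j p i m t)
      = ∑ p, ∑ i, ∑ j, ∑ m, x p * y i * x j * y m * pGam c d i p j m t := by
    refine Finset.sum_congr rfl fun p _ => ?_
    rw [Finset.sum_comm]
    exact Finset.sum_congr rfl fun i _ => Finset.sum_congr rfl fun j _ =>
      Finset.sum_congr rfl fun m _ => by ring
  rw [hE2, P4 c d t x y x y]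
  -- E3
  have hE3 : (∑ p, ∑ i, ∑ j, ∑ m, x p * x i * y j * y m *
        ((-2 * c) * (ph c d t)⁻¹ * (t j * Gam c d p i m t)))
      = (∑ a, t a * y a) * ((-2 * c) * (ph c d t)⁻¹ *
          ∑ p, ∑ i, ∑ m, x p * x i * y m * Gam c d p i m t) := by
    have h1 : ∀ p i : Fin n, (∑ j, ∑ m, x p * x i * y j * y m *
          ((-2 * c) * (ph c d t)⁻¹ * (t j * Gam c d p i m t)))
        = (∑ a, t a * y a) * ((-2 * c) * (ph c d t)⁻¹ *
            ∑ m, x p * x i * y m * Gam c d p i m t) := by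
      intro p i
      calc (∑ j, ∑ m, x p * x i * y j * y m *
            ((-2 * c) * (ph c d t)⁻¹ * (t j * Gam c d p i m t)))
          = ∑ j, (t j * y j) * ((-2 * c) * (ph c d t)⁻¹ *
              ∑ m, x p * x i * y m * Gam c d p i m t) := by
            refine Finset.sum_congr rfl fun j _ => ?_
            rw [Finset.mul_sum, Finset.mul_sum]
            exact Finset.sum_congr rfl fun m _ => by ring
        _ = (∑ a, t a * y a) * ((-2 * c) * (ph c d t)⁻¹ *
              ∑ m, x p * x i * y m * Gam c d p i m t) := by rw [← Finset.sum_mul]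
    simp only [h1, ← Finset.mul_sum]
  rw [hE3, G3 c d t x x y]
  -- E4
  have hE4 : (∑ p, ∑ i, ∑ j, ∑ m, x p * x i * y j * y m *
        ((-2 * c) * (ph c d t)⁻¹ * (t m * Gam c d p i j t)))
      = (∑ a, t a * y a) * ((-2 * c) * (ph c d t)⁻¹ *
          ∑ p, ∑ i, ∑ j, x p * x i * y j * Gam c d p i j t) := by
    have h1 : ∀ p i j : Fin n, (∑ m, x p * x i * y j * y m *
          ((-2 * c) * (ph c d t)⁻¹ * (t m * Gam c d p i j t)))
        = (∑ a, t a * y a) * ((-2 * c) * (ph c d t)⁻¹ *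
            (x p * x i * y j * Gam c d p i j t)) := by
      intro p i j
      calc (∑ m, x p * x i * y j * y m * ((-2 * c) * (ph c d t)⁻¹ * (t m * Gam c d p i j t)))
          = ∑ m, (t m * y m) * ((-2 * c) * (ph c d t)⁻¹
              * (x p * x i * y j * Gam c d p i j t)) :=
            Finset.sum_congr rfl fun m _ => by ring
        _ = _ := by rw [← Finset.sum_mul]
    simp only [h1, ← Finset.mul_sum]
  rw [hE4, G3 c d t x x y]
  -- E6
  have hE6 : (∑ p, ∑ i, ∑ j, ∑ m, x p * x i * y j * y m *
        ((-2 * c) * (ph c d t)⁻¹ * (t i * Gam c d p j m t)))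
      = (∑ a, t a * x a) * ((-2 * c) * (ph c d t)⁻¹ *
          ∑ p, ∑ j, ∑ m, x p * y j * y m * Gam c d p j m t) := by
    have h1 : ∀ p : Fin n, (∑ i, ∑ j, ∑ m, x p * x i * y j * y m *
          ((-2 * c) * (ph c d t)⁻¹ * (t i * Gam c d p j m t)))
        = (∑ a, t a * x a) * ((-2 * c) * (ph c d t)⁻¹ *
            ∑ j, ∑ m, x p * y j * y m * Gam c d p j m t) := by
      intro p
      calc (∑ i, ∑ j, ∑ m, x p * x i * y j * y m *
            ((-2 * c) * (ph c d t)⁻¹ * (t i * Gam c d p j m t)))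
          = ∑ i, (t i * x i) * ((-2 * c) * (ph c d t)⁻¹ *
              ∑ j, ∑ m, x p * y j * y m * Gam c d p j m t) := by
            refine Finset.sum_congr rfl fun i _ => ?_
            calc (∑ j, ∑ m, x p * x i * y j * y m *
                  ((-2 * c) * (ph c d t)⁻¹ * (t i * Gam c d p j m t)))
                = ∑ j, ∑ m, (t i * x i) * ((-2 * c) * (ph c d t)⁻¹ *
                    (x p * y j * y m * Gam c d p j m t)) :=
                  Finset.sum_congr rfl fun j _ => Finset.sum_congr rfl fun m _ => by ring
              _ = _ := by simp only [← Finset.mul_sum]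
        _ = _ := by rw [← Finset.sum_mul]
    simp only [h1, ← Finset.mul_sum]
  rw [hE6, G3 c d t x y y]
  -- E7
  have hE7 : (∑ p, ∑ i, ∑ j, ∑ m, x p * x i * y j * y m *
        ((-2 * c) * (ph c d t)⁻¹ * (t m * Gam c d p j i t)))
      = (∑ a, t a * y a) * ((-2 * c) * (ph c d t)⁻¹ *
          ∑ p, ∑ i, ∑ j, x p * y i * x j * Gam c d p i j t) := by
    have h1 : ∀ p i j : Fin n, (∑ m, x p * x i * y j * y m *
          ((-2 * c) * (ph c d t)⁻¹ * (t m * Gam c d p j i t)))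
        = (∑ a, t a * y a) * ((-2 * c) * (ph c d t)⁻¹ *
            (x p * x i * y j * Gam c d p j i t)) := by
      intro p i j
      calc (∑ m, x p * x i * y j * y m * ((-2 * c) * (ph c d t)⁻¹ * (t m * Gam c d p j i t)))
          = ∑ m, (t m * y m) * ((-2 * c) * (ph c d t)⁻¹
              * (x p * x i * y j * Gam c d p j i t)) :=
            Finset.sum_congr rfl fun m _ => by ring
        _ = _ := by rw [← Finset.sum_mul]
    have h2 : (∑ p, ∑ i, ∑ j, x p * x i * y j * Gam c d p j i t)
        = ∑ p, ∑ i, ∑ j, x p * y i * x j * Gam c d p i j t := by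
      refine Finset.sum_congr rfl fun p _ => ?_
      rw [Finset.sum_comm]
      exact Finset.sum_congr rfl fun i _ => Finset.sum_congr rfl fun j _ => by ring
    simp only [h1, ← Finset.mul_sum]
    rw [h2]
  rw [hE7, G3 c d t x y x]
  have hyx : (∑ a, y a * x a) = ∑ a, x a * y a :=
    Finset.sum_congr rfl fun a _ => mul_comm _ _
  rw [hyx]
  ring

end S13

namespace S13

variable {n : ℕ}

theorem mdown2_met (c d : ℝ) (t : Pt n) (W V : VF n) :
    mdown2 (met c d) W V t = ((ph c d t) ^ 2)⁻¹ * ∑ a, W t a * V t a := by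
  unfold mdown2
  have h1 : ∀ i : Fin n, ∑ j, met c d t i j * W t i * V t j
      = ((ph c d t) ^ 2)⁻¹ * (W t i * V t i) := by
    intro i
    have hb : ∀ j, met c d t i j * W t i * V t j
        = if i = j then ((ph c d t) ^ 2)⁻¹ * (W t i * V t j) else 0 := by
      intro j
      rw [met_apply]
      split_ifs <;> ring
    simp only [hb]
    rw [Finset.sum_ite_eq Finset.univ i]
    simp
  simp only [h1]
  rw [← Finset.mul_sum]

end S13


open S13

/-- The conformally flat metric 𝔥_{ij}(x) = (c|x|² + d)^{-2} δ_{ij} has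
constant sectional curvature 4cd on {x : c|x|² + d ≠ 0}. -/
theorem stmt13 {n : ℕ} (hn : 2 ≤ n) (c d : ℝ) :
    ConstSecCurv {x : Pt n | c * (∑ i, (x i) ^ 2) + d ≠ 0}
      (fun x => Matrix.of fun i j : Fin n =>
        if i = j then ((c * (∑ m, (x m) ^ 2) + d) ^ 2)⁻¹ else 0)
      (4 * c * d) := by
  intro X Y hX hY t ht
  have ht' : t ∈ Us c d := ht
  have hXs : SmoothVF (Us c d) X := hX
  have hYs : SmoothVF (Us c d) Y := hY
  show mdown2 (met c d) (curvV (met c d) X Y Y) X t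
      = 4 * c * d * (mdown2 (met c d) X X t * mdown2 (met c d) Y Y t
          - mdown2 (met c d) X Y t ^ 2)
  rw [mdown2_met, mdown2_met, mdown2_met, mdown2_met]
  have hc : (∑ a, curvV (met c d) X Y Y t a * X t a)
      = ∑ p, ∑ i, ∑ j, ∑ m, X t p * X t i * Y t j * Y t m *
          (pGam c d i p j m t - pGam c d j p i m t
            + ∑ l, (Gam c d p i l t * Gam c d l j m t - Gam c d p j l t * Gam c d l i m t)) := by
    refine Finset.sum_congr rfl fun p _ => ?_
    rw [curv_eq c d hXs hYs hYs ht' p]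
    simp only [pder_Gam c d ht']
    rw [Finset.sum_mul]
    refine Finset.sum_congr rfl fun i _ => ?_
    rw [Finset.sum_mul]
    refine Finset.sum_congr rfl fun j _ => ?_
    rw [Finset.sum_mul]
    exact Finset.sum_congr rfl fun m _ => by ring
  rw [hc, contract c d t (X t) (Y t)]
  have hP : ph c d t ≠ 0 := ht'
  have hT : ph c d t = c * (∑ a, t a * t a) + d := by
    unfold ph
    congr 1
    exact congrArg (c * ·) (Finset.sum_congr rfl fun a _ => sq (t a))
  obtain ⟨P, hPd⟩ : ∃ P, ph c d t = P := ⟨_, rfl⟩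
  rw [hPd] at hP hT ⊢
  have hd' : d = P - c * (∑ a, t a * t a) := by rw [hT]; ring
  rw [hd']
  field_simp
end
end

section
/- Let n ≥ 3, let I ⊆ ℝ be an open interval and let Ω : I → ℝ be a smooth nowhere-vanishing function. On the open set V = {t ∈ ℝ^n : t^n ∈ I}, consider the metric h̃ with components h̃_{ij}(t) = Ω(t^n)² δ_{i+j,n+1}. Then h̃ is flat if and only if (1/Ω)″ = 0 on I, i.e. if and only if Ω(τ) = 1/(cτ + d) on I for some constants c, d. -/
open scoped BigOperators

noncomputable section

variable {n : ℕ}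

namespace Stmt14

/-- real indicator of a proposition -/
def ind (P : Prop) [Decidable P] : ℝ := if P then 1 else 0

lemma ind_ff {P : Prop} [Decidable P] (h : ¬ P) : ind P = 0 := if_neg h
lemma ind_tt {P : Prop} [Decidable P] (h : P) : ind P = 1 := if_pos h

lemma ind_comm {α} [DecidableEq α] (a b : α) : ind (a = b) = ind (b = a) := by
  simp [ind, eq_comm]

lemma ind_rev {n : ℕ} (i p : Fin n) : ind (p = i.rev) = ind (i = p.rev) := by
  simp only [ind]
  congr 1
  apply propext
  constructor <;> (rintro rfl; simp [Fin.rev_rev])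

lemma ind_rev_inj {n : ℕ} (a b : Fin n) : ind (a.rev = b.rev) = ind (a = b) := by
  simp [ind, Fin.rev_inj]

lemma sum_ind_mul {n : ℕ} (a : Fin n) (c : Fin n → ℝ) :
    ∑ m, ind (m = a) * c m = c a := by
  simp [ind, ite_mul]

lemma sum_ind_mul' {n : ℕ} (a : Fin n) (c : Fin n → ℝ) :
    ∑ m, ind (a = m) * c m = c a := by
  simp [ind, ite_mul, eq_comm (a := a)]

/-- Christoffel index tensor: Γ^k_{ij} = f(t^n) AA N k i j. -/
def AA {n : ℕ} (N k i j : Fin n) : ℝ :=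
  ind (i = N) * ind (k = j) + ind (j = N) * ind (k = i) - ind (k = N.rev) * ind (j = i.rev)

lemma sum_AA {n : ℕ} (N k i p r : Fin n) :
    ∑ m, AA N k i m * AA N m p r
      = ind (i = N) * AA N k p r + ind (k = i) * AA N N p r
        - ind (k = N.rev) * AA N i.rev p r := by
  have h1 : ∀ m : Fin n, AA N k i m * AA N m p r
      = ind (i = N) * (ind (k = m) * AA N m p r)
        + ind (k = i) * (ind (m = N) * AA N m p r)
        - ind (k = N.rev) * (ind (m = i.rev) * AA N m p r) := by
    intro m; simp only [AA]; ring
  simp only [h1, Finset.sum_sub_distrib, Finset.sum_add_distrib, ← Finset.mul_sum]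
  rw [sum_ind_mul' k (fun m => AA N m p r), sum_ind_mul N (fun m => AA N m p r),
    sum_ind_mul i.rev (fun m => AA N m p r)]

/-- Combinatorial symmetry identity behind flatness. -/
lemma CC_symm {n : ℕ} (N : Fin n) (hN : ¬ (N = N.rev)) (k i p r : Fin n) :
    ind (i = N) * AA N k p r + (∑ m, AA N k i m * AA N m p r)
      = ind (p = N) * AA N k i r + (∑ m, AA N k p m * AA N m i r) := by
  have nf : ∀ i p : Fin n,
      ind (i = N) * AA N k p r + (∑ m, AA N k i m * AA N m p r)
        = 2 * ind (i = N) * ind (p = N) * ind (k = r)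
          + 2 * ind (i = N) * ind (r = N) * ind (k = p)
          - ind (i = N) * ind (k = N.rev) * ind (r = p.rev)
          + 2 * ind (k = i) * ind (p = N) * ind (r = N)
          - ind (k = N.rev) * ind (p = N) * ind (r = i.rev)
          - ind (k = N.rev) * ind (r = N) * ind (p = i.rev) := by
    intro i p
    rw [sum_AA]
    simp only [AA, ind_ff hN, ind_rev_inj,
      ind_comm N r, ind_comm N p, ind_comm i.rev r, ind_comm i.rev p]
    ring
  rw [nf i p, nf p i, ind_rev i p]
  ring

end Stmt14

namespace Stmt14

variable {n : ℕ}

lemma pder_congr {f g : Pt n → ℝ} {t : Pt n} (h : f =ᶠ[nhds t] g) (i : Fin n) :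
    pder i f t = pder i g t := by
  unfold pder; rw [Filter.EventuallyEq.fderiv_eq h]

lemma pder_const (i : Fin n) (c : ℝ) (t : Pt n) : pder i (fun _ => c) t = 0 := by
  simp [pder]

lemma pder_hasFDeriv {f : Pt n → ℝ} {f' : Pt n →L[ℝ] ℝ} {t : Pt n}
    (h : HasFDerivAt f f' t) (i : Fin n) : pder i f t = f' (Pi.single i 1) := by
  rw [pder, h.fderiv]

lemma pder_sum {ι : Type*} (s : Finset ι) (F : ι → Pt n → ℝ) {t : Pt n}
    (h : ∀ j ∈ s, DifferentiableAt ℝ (F j) t) (i : Fin n) :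
    pder i (fun x => ∑ j ∈ s, F j x) t = ∑ j ∈ s, pder i (F j) t := by
  unfold pder
  rw [fderiv_fun_sum h]
  simp

lemma pder_mul {f g : Pt n → ℝ} {t : Pt n} (hf : DifferentiableAt ℝ f t)
    (hg : DifferentiableAt ℝ g t) (i : Fin n) :
    pder i (fun x => f x * g x) t = pder i f t * g t + f t * pder i g t := by
  unfold pder
  rw [fderiv_fun_mul hf hg]
  simp; ring

lemma pder_const_mul {g : Pt n → ℝ} {t : Pt n} (c : ℝ)
    (hg : DifferentiableAt ℝ g t) (i : Fin n) :
    pder i (fun x => c * g x) t = c * pder i g t := by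
  unfold pder
  rw [fderiv_const_mul hg]
  simp

lemma pder_add {f g : Pt n → ℝ} {t : Pt n} (hf : DifferentiableAt ℝ f t)
    (hg : DifferentiableAt ℝ g t) (i : Fin n) :
    pder i (fun x => f x + g x) t = pder i f t + pder i g t := by
  unfold pder
  rw [fderiv_fun_add hf hg]
  simp

lemma pder_comp_proj {φ : ℝ → ℝ} {a : ℝ} {t : Pt n} (N i : Fin n)
    (h : HasDerivAt φ a (t N)) :
    pder i (fun s => φ (s N)) t = if i = N then a else 0 := by
  have hproj : HasFDerivAt (fun s : Pt n => s N)
      (ContinuousLinearMap.proj (R := ℝ) (φ := fun _ : Fin n => ℝ) N) t :=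
    (ContinuousLinearMap.proj (R := ℝ) (φ := fun _ : Fin n => ℝ) N).hasFDerivAt
  have h2 : HasFDerivAt (fun s : Pt n => φ (s N))
      (a • ContinuousLinearMap.proj (R := ℝ) (φ := fun _ : Fin n => ℝ) N) t :=
    h.comp_hasFDerivAt t hproj
  rw [pder_hasFDeriv h2 i]
  simp [Pi.single_apply, eq_comm]

lemma diffAt_comp_proj {φ : ℝ → ℝ} {t : Pt n} (N : Fin n)
    (h : DifferentiableAt ℝ φ (t N)) :
    DifferentiableAt ℝ (fun s : Pt n => φ (s N)) t :=
  h.comp t (ContinuousLinearMap.proj (R := ℝ) (φ := fun _ : Fin n => ℝ) N).differentiableAt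

lemma diff_pder {F : Pt n → ℝ} {t : Pt n} (h : ContDiffAt ℝ 2 F t) (p : Fin n) :
    DifferentiableAt ℝ (fun s => pder p F s) t := by
  have h1 : ContDiffAt ℝ 1 (fderiv ℝ F) t := h.fderiv_right (le_refl _)
  exact ((ContinuousLinearMap.apply ℝ ℝ (Pi.single p (1:ℝ))).differentiableAt).comp t
    (h1.differentiableAt one_ne_zero)

lemma pder_pder_symm {F : Pt n → ℝ} {t : Pt n} (h : ContDiffAt ℝ 2 F t) (i p : Fin n) :
    pder i (fun s => pder p F s) t = pder p (fun s => pder i F s) t := by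
  have h1 : ContDiffAt ℝ 1 (fderiv ℝ F) t := h.fderiv_right (le_refl _)
  have hd : DifferentiableAt ℝ (fderiv ℝ F) t := h1.differentiableAt one_ne_zero
  have hsym := (h.isSymmSndFDerivAt (by simp))
  unfold pder
  have e1 : fderiv ℝ (fun s => fderiv ℝ F s (Pi.single p 1)) t (Pi.single i 1)
      = fderiv ℝ (fderiv ℝ F) t (Pi.single i 1) (Pi.single p 1) := by
    rw [fderiv_clm_apply hd (differentiableAt_const _)]
    simp
  have e2 : fderiv ℝ (fun s => fderiv ℝ F s (Pi.single i 1)) t (Pi.single p 1)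
      = fderiv ℝ (fderiv ℝ F) t (Pi.single p 1) (Pi.single i 1) := by
    rw [fderiv_clm_apply hd (differentiableAt_const _)]
    simp
  rw [e1, e2]
  exact hsym (Pi.single i 1) (Pi.single p 1)

end Stmt14

namespace Stmt14

section Metric
variable {n : ℕ}

/-- The metric of the statement. -/
def gMet (N : Fin n) (Ω : ℝ → ℝ) : Met n :=
  fun t => Matrix.of fun i j => if j = i.rev then (Ω (t N))^2 else 0

lemma ind_rev' {n : ℕ} (a b : Fin n) : ind (a.rev = b) = ind (a = b.rev) := by
  simp [ind, Fin.rev_eq_iff]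

lemma gMet_inv (N : Fin n) (Ω : ℝ → ℝ) {t : Pt n} (h : Ω (t N) ≠ 0) :
    (gMet N Ω t)⁻¹ = Matrix.of fun i j => ind (j = i.rev) * ((Ω (t N))^2)⁻¹ := by
  apply Matrix.inv_eq_left_inv
  ext i j
  simp only [Matrix.mul_apply, Matrix.of_apply, gMet, ind, ite_mul, one_mul, zero_mul]
  rw [Finset.sum_ite_eq' Finset.univ i.rev
    (fun l => ((Ω (t N))^2)⁻¹ * (if j = l.rev then (Ω (t N))^2 else 0))]
  simp only [Finset.mem_univ, if_true, Fin.rev_rev]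
  by_cases hij : j = i
  · subst hij; simp [Matrix.one_apply, inv_mul_cancel₀ (pow_ne_zero 2 h)]
  · simp [hij, Matrix.one_apply, Ne.symm hij]

lemma pder_gMet (N : Fin n) {Ω : ℝ → ℝ} {t : Pt n} (hd : DifferentiableAt ℝ Ω (t N))
    (l i j : Fin n) :
    pder l (fun s => gMet N Ω s i j) t
      = ind (j = i.rev) * ind (l = N) * (2 * Ω (t N) * deriv Ω (t N)) := by
  by_cases hij : j = i.rev
  · simp only [gMet, Matrix.of_apply, if_pos hij, ind_tt hij, one_mul]
    rw [pder_comp_proj N l (hd.hasDerivAt.fun_pow 2)]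
    by_cases hl : l = N
    · rw [if_pos hl, ind_tt hl]; push_cast; ring
    · rw [if_neg hl, ind_ff hl]; ring
  · simp only [gMet, Matrix.of_apply, if_neg hij, ind_ff hij, zero_mul]
    exact pder_const l 0 t

lemma chr_gMet (N : Fin n) {Ω : ℝ → ℝ} {t : Pt n} (h0 : Ω (t N) ≠ 0)
    (hd : DifferentiableAt ℝ Ω (t N)) (k i j : Fin n) :
    chr (gMet N Ω) k i j t = (deriv Ω (t N) / Ω (t N)) * AA N k i j := by
  unfold chr
  rw [gMet_inv N Ω h0]
  have hterm : ∀ l : Fin n,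
      (Matrix.of fun i j : Fin n => ind (j = i.rev) * ((Ω (t N))^2)⁻¹) k l *
        (pder i (fun s => gMet N Ω s j l) t + pder j (fun s => gMet N Ω s i l) t
          - pder l (fun s => gMet N Ω s i j) t)
      = ind (l = k.rev) * (((Ω (t N))^2)⁻¹ *
          (pder i (fun s => gMet N Ω s j l) t + pder j (fun s => gMet N Ω s i l) t
            - pder l (fun s => gMet N Ω s i j) t)) := by
    intro l; simp only [Matrix.of_apply]; ring
  simp only [hterm]
  rw [sum_ind_mul k.rev (fun l => ((Ω (t N))^2)⁻¹ *
      (pder i (fun s => gMet N Ω s j l) t + pder j (fun s => gMet N Ω s i l) t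
        - pder l (fun s => gMet N Ω s i j) t))]
  rw [pder_gMet N hd i j k.rev, pder_gMet N hd j i k.rev, pder_gMet N hd k.rev i j]
  rw [ind_rev_inj k j, ind_rev_inj k i, ind_rev' k N]
  simp only [AA]
  field_simp
end Metric
end Stmt14


namespace Stmt14
section Part4
variable {n : ℕ}

/-- Explicit covariant derivative for the model metric. -/
def cF (N : Fin n) (f : ℝ → ℝ) (Y Z : VF n) : VF n := fun s k =>
  ∑ p, Y s p * (pder p (fun u => Z u k) s + f (s N) * ∑ m, AA N k p m * Z s m)

lemma covV_eq_cF (N : Fin n) {Ω : ℝ → ℝ} {t : Pt n} (h0 : Ω (t N) ≠ 0)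
    (hd : DifferentiableAt ℝ Ω (t N)) (Y Z : VF n) (k : Fin n) :
    covV (gMet N Ω) Y Z t k = cF N (fun τ => deriv Ω τ / Ω τ) Y Z t k := by
  unfold covV cF
  apply Finset.sum_congr rfl
  intro p _
  congr 2
  rw [Finset.mul_sum]
  apply Finset.sum_congr rfl
  intro m _
  rw [chr_gMet N h0 hd k p m]
  ring

lemma pder_cF (N : Fin n) (f : ℝ → ℝ) (Y Z : VF n) {t : Pt n} (k i : Fin n)
    (hY : ∀ p, DifferentiableAt ℝ (fun s => Y s p) t)
    (hZ : ∀ m, ContDiffAt ℝ 2 (fun s => Z s m) t)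
    (hf : HasDerivAt f (f (t N)^2) (t N)) :
    pder i (fun s => cF N f Y Z s k) t
      = ∑ p, (pder i (fun s => Y s p) t *
            (pder p (fun u => Z u k) t + f (t N) * ∑ m, AA N k p m * Z t m)
          + Y t p * (pder i (fun s => pder p (fun u => Z u k) s) t
              + ind (i = N) * f (t N)^2 * (∑ m, AA N k p m * Z t m)
              + f (t N) * ∑ m, AA N k p m * pder i (fun u => Z u m) t)) := by
  have hG : DifferentiableAt ℝ (fun s : Pt n => f (s N)) t :=
    diffAt_comp_proj N hf.differentiableAt
  have hZd : ∀ m : Fin n, DifferentiableAt ℝ (fun s => Z s m) t :=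
    fun m => (hZ m).differentiableAt two_ne_zero
  have hQd : ∀ p : Fin n, DifferentiableAt ℝ (fun s => ∑ m, AA N k p m * Z s m) t := by
    intro p
    exact DifferentiableAt.fun_sum fun m _ => (hZd m).const_mul _
  have hpd : ∀ p : Fin n, DifferentiableAt ℝ (fun s => pder p (fun u => Z u k) s) t :=
    fun p => diff_pder (hZ k) p
  have hw : ∀ p : Fin n, DifferentiableAt ℝ
      (fun s => pder p (fun u => Z u k) s + f (s N) * ∑ m, AA N k p m * Z s m) t :=
    fun p => (hpd p).add (hG.mul (hQd p))
  show pder i (fun s => ∑ p, (fun (p : Fin n) (s : Pt n) => Y s p *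
      (pder p (fun u => Z u k) s + f (s N) * ∑ m, AA N k p m * Z s m)) p s) t = _
  rw [pder_sum Finset.univ (fun (p : Fin n) (s : Pt n) => Y s p *
      (pder p (fun u => Z u k) s + f (s N) * ∑ m, AA N k p m * Z s m)) (fun p _ => (hY p).mul (hw p)) i]
  apply Finset.sum_congr rfl
  intro p _
  rw [pder_mul (hY p) (hw p) i]
  rw [pder_add (g := fun s => f (s N) * ∑ m, AA N k p m * Z s m) (hpd p) (hG.mul (hQd p)) i]
  rw [pder_mul hG (hQd p) i]
  rw [pder_comp_proj N i hf]
  rw [pder_sum Finset.univ (fun m s => AA N k p m * Z s m)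
      (fun m _ => (hZd m).const_mul _) i]
  rw [Finset.sum_congr rfl
    (fun m _ => pder_const_mul (g := fun s => Z s m) (AA N k p m) (hZd m) i)]
  rcases eq_or_ne i N with h | h
  · simp only [if_pos h, ind_tt h]; ring
  · simp only [if_neg h, ind_ff h]; ring

/-- summand for the antisymmetrization argument -/
def EE (N k : Fin n) (f0 : ℝ) (x y z : Fin n → ℝ) (a b c2 s2 : Fin n → Fin n → ℝ)
    (i p : Fin n) : ℝ :=
  x i * a i p * (c2 p k + f0 * ∑ m, AA N k p m * z m)
  + x i * y p * s2 i p
  + f0^2 * (x i * y p) * (ind (i = N) * (∑ m, AA N k p m * z m)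
      + ∑ m, AA N k i m * (∑ r, AA N m p r * z r))
  + f0 * (x i * y p) * ((∑ m, AA N k p m * c2 i m) + ∑ m, AA N k i m * c2 p m)
  + y p * b p i * (c2 i k + f0 * ∑ m, AA N k i m * z m)

/-- The big algebraic identity. -/
lemma algebra_zero (N : Fin n) (hN : ¬ (N = N.rev)) (k : Fin n) (f0 : ℝ)
    (x y z : Fin n → ℝ) (a b c2 s2 : Fin n → Fin n → ℝ)
    (hs2 : ∀ i p, s2 i p = s2 p i) :
    (∑ i, x i * ((∑ p, (a i p * (c2 p k + f0 * ∑ m, AA N k p m * z m)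
          + y p * (s2 i p + ind (i = N) * f0^2 * (∑ m, AA N k p m * z m)
              + f0 * ∑ m, AA N k p m * c2 i m)))
        + ∑ m, (f0 * AA N k i m) * (∑ p, y p * (c2 p m + f0 * ∑ r, AA N m p r * z r))))
    - (∑ i, y i * ((∑ p, (b i p * (c2 p k + f0 * ∑ m, AA N k p m * z m)
          + x p * (s2 i p + ind (i = N) * f0^2 * (∑ m, AA N k p m * z m)
              + f0 * ∑ m, AA N k p m * c2 i m)))
        + ∑ m, (f0 * AA N k i m) * (∑ p, x p * (c2 p m + f0 * ∑ r, AA N m p r * z r))))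
    - (∑ i, (∑ p, (x p * a p i - y p * b p i)) *
          (c2 i k + f0 * ∑ m, AA N k i m * z m)) = 0 := by
  have hΨ : ∀ i p : Fin n,
      ind (i = N) * (∑ m, AA N k p m * z m)
          + ∑ m, AA N k i m * (∑ r, AA N m p r * z r)
        = ind (p = N) * (∑ m, AA N k i m * z m)
          + ∑ m, AA N k p m * (∑ r, AA N m i r * z r) := by
    have e : ∀ i p : Fin n,
        ind (i = N) * (∑ m, AA N k p m * z m)
            + ∑ m, AA N k i m * (∑ r, AA N m p r * z r)
          = ∑ r, (ind (i = N) * AA N k p r + ∑ m, AA N k i m * AA N m p r) * z r := by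
      intro i p
      have e1 : ∑ m, AA N k i m * (∑ r, AA N m p r * z r)
          = ∑ r, (∑ m, AA N k i m * AA N m p r) * z r := by
        calc ∑ m, AA N k i m * (∑ r, AA N m p r * z r)
            = ∑ m, ∑ r, AA N k i m * AA N m p r * z r := by
              refine Finset.sum_congr rfl fun m _ => ?_
              rw [Finset.mul_sum]
              exact Finset.sum_congr rfl fun r _ => by ring
          _ = ∑ r, ∑ m, AA N k i m * AA N m p r * z r := Finset.sum_comm
          _ = ∑ r, (∑ m, AA N k i m * AA N m p r) * z r := by
              refine Finset.sum_congr rfl fun r _ => ?_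
              rw [Finset.sum_mul]
      rw [e1, Finset.mul_sum, ← Finset.sum_add_distrib]
      exact Finset.sum_congr rfl fun r _ => by ring
    intro i p
    rw [e i p, e p i]
    exact Finset.sum_congr rfl fun r _ => by rw [CC_symm N hN k i p r]
  -- per-i chunk normal form
  have chunk : ∀ (x y : Fin n → ℝ) (a : Fin n → Fin n → ℝ),
      (∑ i, x i * ((∑ p, (a i p * (c2 p k + f0 * ∑ m, AA N k p m * z m)
            + y p * (s2 i p + ind (i = N) * f0^2 * (∑ m, AA N k p m * z m)
                + f0 * ∑ m, AA N k p m * c2 i m)))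
          + ∑ m, (f0 * AA N k i m) * (∑ p, y p * (c2 p m + f0 * ∑ r, AA N m p r * z r))))
      = ∑ i, ∑ p, (x i * a i p * (c2 p k + f0 * ∑ m, AA N k p m * z m)
          + x i * y p * s2 i p
          + f0^2 * (x i * y p) * (ind (i = N) * (∑ m, AA N k p m * z m)
              + ∑ m, AA N k i m * (∑ r, AA N m p r * z r))
          + f0 * (x i * y p) * ((∑ m, AA N k p m * c2 i m) + ∑ m, AA N k i m * c2 p m)) := by
    intro x y a
    refine Finset.sum_congr rfl fun i _ => ?_
    have e2 : ∑ m, (f0 * AA N k i m) * (∑ p, y p * (c2 p m + f0 * ∑ r, AA N m p r * z r))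
        = ∑ p, ∑ m, (f0 * AA N k i m) * (y p * (c2 p m + f0 * ∑ r, AA N m p r * z r)) := by
      rw [Finset.sum_comm]
      exact Finset.sum_congr rfl fun m _ => by rw [Finset.mul_sum]
    rw [e2, mul_add, Finset.mul_sum, Finset.mul_sum, ← Finset.sum_add_distrib]
    refine Finset.sum_congr rfl fun p _ => ?_
    have e3 : ∑ m, x i * ((f0 * AA N k i m) * (y p * (c2 p m + f0 * ∑ r, AA N m p r * z r)))
        = f0 * (x i * y p) * (∑ m, AA N k i m * c2 p m)
          + f0^2 * (x i * y p) * (∑ m, AA N k i m * (∑ r, AA N m p r * z r)) := by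
      rw [Finset.mul_sum, Finset.mul_sum, ← Finset.sum_add_distrib]
      exact Finset.sum_congr rfl fun m _ => by ring
    rw [show x i * ∑ m, (f0 * AA N k i m) * (y p * (c2 p m + f0 * ∑ r, AA N m p r * z r))
        = ∑ m, x i * ((f0 * AA N k i m) * (y p * (c2 p m + f0 * ∑ r, AA N m p r * z r))) from
      Finset.mul_sum _ _ _]
    rw [e3]
    ring
  have h3 : (∑ i, (∑ p, (x p * a p i - y p * b p i)) *
        (c2 i k + f0 * ∑ m, AA N k i m * z m))
      = ∑ i, ∑ p, (x p * a p i * (c2 i k + f0 * ∑ m, AA N k i m * z m)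
          - y p * b p i * (c2 i k + f0 * ∑ m, AA N k i m * z m)) := by
    refine Finset.sum_congr rfl fun i _ => ?_
    rw [Finset.sum_mul]
    exact Finset.sum_congr rfl fun p _ => by ring
  rw [chunk x y a, chunk y x b, h3]
  rw [← Finset.sum_sub_distrib, ← Finset.sum_sub_distrib]
  have key2 : ∀ i : Fin n,
      ((∑ p, (x i * a i p * (c2 p k + f0 * ∑ m, AA N k p m * z m)
          + x i * y p * s2 i p
          + f0^2 * (x i * y p) * (ind (i = N) * (∑ m, AA N k p m * z m)
              + ∑ m, AA N k i m * (∑ r, AA N m p r * z r))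
          + f0 * (x i * y p) * ((∑ m, AA N k p m * c2 i m) + ∑ m, AA N k i m * c2 p m)))
        - (∑ p, (y i * b i p * (c2 p k + f0 * ∑ m, AA N k p m * z m)
          + y i * x p * s2 i p
          + f0^2 * (y i * x p) * (ind (i = N) * (∑ m, AA N k p m * z m)
              + ∑ m, AA N k i m * (∑ r, AA N m p r * z r))
          + f0 * (y i * x p) * ((∑ m, AA N k p m * c2 i m) + ∑ m, AA N k i m * c2 p m)))
        - (∑ p, (x p * a p i * (c2 i k + f0 * ∑ m, AA N k i m * z m)
          - y p * b p i * (c2 i k + f0 * ∑ m, AA N k i m * z m))))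
      = ∑ p, (EE N k f0 x y z a b c2 s2 i p - EE N k f0 x y z a b c2 s2 p i) := by
    intro i
    rw [← Finset.sum_sub_distrib, ← Finset.sum_sub_distrib]
    refine Finset.sum_congr rfl fun p _ => ?_
    simp only [EE]
    rw [hs2 p i, ← hΨ i p]
    ring
  rw [Finset.sum_congr rfl (fun i _ => key2 i)]
  rw [Finset.sum_congr rfl (fun i (_ : i ∈ Finset.univ) => Finset.sum_sub_distrib _ _)]
  rw [Finset.sum_sub_distrib]
  rw [Finset.sum_comm (s := Finset.univ) (t := Finset.univ)
    (f := fun i p => EE N k f0 x y z a b c2 s2 p i)]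
  exact sub_self _

/-- Main direction: the ODE implies flatness. -/
lemma key (N : Fin n) (hN : ¬ (N = N.rev)) {I : Set ℝ} (hIopen : IsOpen I)
    {Ω : ℝ → ℝ} (hΩ : ContDiffOn ℝ (⊤ : ℕ∞) Ω I) (hΩ0 : ∀ τ ∈ I, Ω τ ≠ 0)
    (hP : ∀ τ ∈ I, HasDerivAt (fun σ => deriv Ω σ / Ω σ) ((deriv Ω τ / Ω τ)^2) τ) :
    FlatOn {t : Pt n | t N ∈ I} (gMet N Ω) := by
  intro X Y Z hX hY hZ t ht k
  set U : Set (Pt n) := {t : Pt n | t N ∈ I} with hUdef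
  have hUopen : IsOpen U := IsOpen.preimage (continuous_apply N) hIopen
  have htI : t N ∈ I := ht
  set f : ℝ → ℝ := fun σ => deriv Ω σ / Ω σ with hfdef
  have hΩd : ∀ s ∈ U, DifferentiableAt ℝ Ω (s N) := fun s hs =>
    (hΩ.contDiffAt (hIopen.mem_nhds hs)).differentiableAt (by simp)
  have hchr : ∀ s ∈ U, ∀ k' i' j', chr (gMet N Ω) k' i' j' s = f (s N) * AA N k' i' j' :=
    fun s hs k' i' j' => chr_gMet N (hΩ0 _ hs) (hΩd s hs) k' i' j'
  have hcov : ∀ (Ya Za : VF n), ∀ s ∈ U, ∀ k',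
      covV (gMet N Ω) Ya Za s k' = cF N f Ya Za s k' :=
    fun Ya Za s hs k' => covV_eq_cF N (hΩ0 _ hs) (hΩd s hs) Ya Za k'
  have hXd : ∀ p, DifferentiableAt ℝ (fun s => X s p) t := fun p =>
    ((hX p).contDiffAt (hUopen.mem_nhds ht)).differentiableAt (by simp)
  have hYd : ∀ p, DifferentiableAt ℝ (fun s => Y s p) t := fun p =>
    ((hY p).contDiffAt (hUopen.mem_nhds ht)).differentiableAt (by simp)
  have hZ2 : ∀ m, ContDiffAt ℝ 2 (fun s => Z s m) t := fun m =>
    ((hZ m).contDiffAt (hUopen.mem_nhds ht)).of_le (WithTop.coe_le_coe.mpr le_top)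
  have hf0 : HasDerivAt f (f (t N)^2) (t N) := hP _ htI
  have hs2 : ∀ i p, pder i (fun s => pder p (fun u => Z u k) s) t
      = pder p (fun s => pder i (fun u => Z u k) s) t :=
    fun i p => pder_pder_symm (hZ2 k) i p
  have hterm : ∀ (Xa Ya : VF n), (∀ p, DifferentiableAt ℝ (fun s => Ya s p) t) →
      covV (gMet N Ω) Xa (covV (gMet N Ω) Ya Z) t k
      = ∑ i, Xa t i * ((∑ p, (pder i (fun s => Ya s p) t *
            (pder p (fun u => Z u k) t + f (t N) * ∑ m, AA N k p m * Z t m)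
          + Ya t p * (pder i (fun s => pder p (fun u => Z u k) s) t
              + ind (i = N) * f (t N)^2 * (∑ m, AA N k p m * Z t m)
              + f (t N) * ∑ m, AA N k p m * pder i (fun u => Z u m) t)))
        + ∑ m, (f (t N) * AA N k i m) *
            (∑ p, Ya t p * (pder p (fun u => Z u m) t + f (t N) * ∑ r, AA N m p r * Z t r))) := by
    intro Xa Ya hYad
    have hW : (fun s => covV (gMet N Ω) Ya Z s k) =ᶠ[nhds t] (fun s => cF N f Ya Z s k) :=
      Filter.eventuallyEq_of_mem (hUopen.mem_nhds ht) (fun s hs => hcov Ya Z s hs k)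
    show (∑ i, Xa t i * (pder i (fun s => covV (gMet N Ω) Ya Z s k) t
        + ∑ m, chr (gMet N Ω) k i m t * covV (gMet N Ω) Ya Z t m)) = _
    refine Finset.sum_congr rfl fun i _ => ?_
    congr 1
    congr 1
    · rw [pder_congr hW i, pder_cF N f Ya Z k i hYad hZ2 hf0]
    · refine Finset.sum_congr rfl fun m _ => ?_
      rw [hchr t ht k i m, hcov Ya Z t ht m]
      rfl
  have hterm3 : covV (gMet N Ω) (vbr X Y) Z t k
      = ∑ i, (∑ p, (X t p * pder p (fun s => Y s i) t - Y t p * pder p (fun s => X s i) t)) *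
          (pder i (fun u => Z u k) t + f (t N) * ∑ m, AA N k i m * Z t m) := by
    show (∑ i, vbr X Y t i * (pder i (fun s => Z s k) t
        + ∑ m, chr (gMet N Ω) k i m t * Z t m)) = _
    refine Finset.sum_congr rfl fun i _ => ?_
    congr 1
    congr 1
    rw [Finset.mul_sum]
    refine Finset.sum_congr rfl fun m _ => ?_
    rw [hchr t ht k i m]
    ring
  show covV (gMet N Ω) X (covV (gMet N Ω) Y Z) t k
      - covV (gMet N Ω) Y (covV (gMet N Ω) X Z) t k
      - covV (gMet N Ω) (vbr X Y) Z t k = 0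
  rw [hterm X Y hYd, hterm Y X hXd, hterm3]
  exact algebra_zero N hN k (f (t N)) (X t) (Y t) (Z t)
    (fun i p => pder i (fun s => Y s p) t) (fun i p => pder i (fun s => X s p) t)
    (fun i m => pder i (fun u => Z u m) t)
    (fun i p => pder i (fun s => pder p (fun u => Z u k) s) t) hs2

/-- Curvature on constant coordinate fields. -/
lemma covV_constant (g : Met n) (j l : Fin n) :
    covV g (fun _ => Pi.single j 1) (fun _ => Pi.single l 1)
      = fun t k => chr g k j l t := by
  funext t k
  unfold covV
  have h1 : ∀ i : Fin n, pder i (fun _ : Pt n => (Pi.single l 1 : Fin n → ℝ) k) t = 0 :=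
    by intro i; simp [pder]
  simp only [h1, zero_add]
  have h2 : ∀ i : Fin n, (∑ m, chr g k i m t * (Pi.single l 1 : Fin n → ℝ) m) = chr g k i l t := by
    intro i
    simp [Pi.single_apply, mul_ite, Finset.sum_ite_eq']
  simp only [h2]
  simp [Pi.single_apply, ite_mul, Finset.sum_ite_eq']

lemma curv_const (g : Met n) (i0 j0 l0 : Fin n) (t : Pt n) (k : Fin n) :
    curvV g (fun _ => Pi.single i0 1) (fun _ => Pi.single j0 1) (fun _ => Pi.single l0 1) t k
      = (pder i0 (fun s => chr g k j0 l0 s) t + ∑ m, chr g k i0 m t * chr g m j0 l0 t)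
        - (pder j0 (fun s => chr g k i0 l0 s) t + ∑ m, chr g k j0 m t * chr g m i0 l0 t) := by
  have hvbr : vbr (fun _ : Pt n => Pi.single i0 (1:ℝ)) (fun _ => Pi.single j0 1) = fun _ _ => 0 := by
    funext t i
    unfold vbr
    have : ∀ p : Fin n, pder p (fun _ : Pt n => (Pi.single j0 1 : Fin n → ℝ) i) t = 0 :=
      by intro p; simp [pder]
    simp [this, pder_const]
  unfold curvV
  rw [covV_constant g j0 l0, covV_constant g i0 l0, hvbr]
  have hzero : covV g (fun _ _ => (0:ℝ)) (fun _ => Pi.single l0 1) t k = 0 := by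
    unfold covV; simp
  rw [hzero]
  have hc : ∀ (a0 : Fin n) (W : Pt n → Fin n → ℝ),
      covV g (fun _ => Pi.single a0 1) W t k
        = pder a0 (fun s => W s k) t + ∑ m, chr g k a0 m t * W t m := by
    intro a0 W
    unfold covV
    rw [Finset.sum_eq_single a0]
    · simp
    · intro b _ hb
      simp [Pi.single_apply, hb]
    · simp
  rw [hc i0 (fun t k => chr g k j0 l0 t), hc j0 (fun t k => chr g k i0 l0 t)]
  ring


lemma ind_refl {α} [DecidableEq α] (a : α) : ind (a = a) = 1 := ind_tt rfl
lemma ind_true : ind True = 1 := if_pos trivial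

lemma flat_to_ode (hn3 : 3 ≤ n) (N : Fin n) (hNval : (N : ℕ) = n - 1) {I : Set ℝ}
    (hIopen : IsOpen I) {Ω : ℝ → ℝ} (hΩ : ContDiffOn ℝ (⊤ : ℕ∞) Ω I) (hΩ0 : ∀ τ ∈ I, Ω τ ≠ 0)
    (hflat : FlatOn {t : Pt n | t N ∈ I} (gMet N Ω)) :
    ∀ τ ∈ I, deriv (fun σ => deriv Ω σ / Ω σ) τ = (deriv Ω τ / Ω τ)^2 := by
  intro τ hτ
  set f : ℝ → ℝ := fun σ => deriv Ω σ / Ω σ with hfdef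
  have hn0 : 0 < n := by omega
  set j1 : Fin n := ⟨1, by omega⟩ with hj1
  have hNrv : (N.rev : ℕ) = 0 := by
    rw [Fin.val_rev, hNval]; omega
  have hj1N : ¬ (j1 = N) := by
    intro h; apply_fun Fin.val at h; rw [hNval] at h; simp [hj1] at h; omega
  have hj1Nrev : ¬ (j1 = N.rev) := by
    intro h; apply_fun Fin.val at h; rw [hNrv] at h; simp [hj1] at h
  have hNj1rev : ¬ (N = j1.rev) := by
    intro h; apply_fun Fin.val at h; rw [Fin.val_rev, hNval] at h; simp [hj1] at h; omega
  have hNN : ¬ (N = N.rev) := by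
    intro h; apply_fun Fin.val at h; rw [hNval, hNrv] at h; omega
  set U : Set (Pt n) := {t : Pt n | t N ∈ I} with hUdef
  have hUopen : IsOpen U := IsOpen.preimage (continuous_apply N) hIopen
  set t : Pt n := fun _ => τ with htdef
  have ht : t ∈ U := hτ
  have hΩd : ∀ s ∈ U, DifferentiableAt ℝ Ω (s N) := fun s hs =>
    (hΩ.contDiffAt (hIopen.mem_nhds hs)).differentiableAt (by simp)
  have hchr : ∀ s ∈ U, ∀ k' i' j', chr (gMet N Ω) k' i' j' s = f (s N) * AA N k' i' j' :=
    fun s hs k' i' j' => chr_gMet N (hΩ0 _ hs) (hΩd s hs) k' i' j'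
  have hωC : ContDiffOn ℝ (⊤ : ℕ∞) (deriv Ω) I := hΩ.deriv_of_isOpen hIopen (by simp)
  have hfC : ContDiffOn ℝ (⊤ : ℕ∞) f I := hωC.div hΩ hΩ0
  have hfd : DifferentiableAt ℝ f τ :=
    (hfC.contDiffAt (hIopen.mem_nhds hτ)).differentiableAt (by simp)
  have hpder : ∀ (d k' i' j' : Fin n),
      pder d (fun s => chr (gMet N Ω) k' i' j' s) t
        = if d = N then deriv f τ * AA N k' i' j' else 0 := by
    intro d k' i' j'
    have hEE : (fun s => chr (gMet N Ω) k' i' j' s)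
        =ᶠ[nhds t] (fun s => f (s N) * AA N k' i' j') :=
      Filter.eventuallyEq_of_mem (hUopen.mem_nhds ht) (fun s hs => hchr s hs k' i' j')
    rw [pder_congr hEE d]
    exact pder_comp_proj (φ := fun y => f y * AA N k' i' j') N d (hfd.hasDerivAt.mul_const _)
  have hsm : ∀ a : Fin n, SmoothVF U (fun _ : Pt n => (Pi.single a 1 : Fin n → ℝ)) :=
    fun a k => contDiffOn_const
  have h0 := hflat _ _ _ (hsm N) (hsm j1) (hsm N) t ht j1
  rw [curv_const (gMet N Ω) N j1 N t j1] at h0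
  have hsum : ∀ a c : Fin n, (∑ m, chr (gMet N Ω) j1 a m t * chr (gMet N Ω) m c N t)
      = f τ ^ 2 * ∑ m, AA N j1 a m * AA N m c N := by
    intro a c
    rw [Finset.mul_sum]
    refine Finset.sum_congr rfl fun m _ => ?_
    rw [hchr t ht j1 a m, hchr t ht m c N]
    ring
  rw [hpder N j1 j1 N, hpder j1 j1 N N, hsum N j1, hsum j1 N, sum_AA, sum_AA] at h0
  have eA1 : AA N j1 j1 N = 1 := by
    simp only [AA, ind_refl, ind_true, ind_ff hj1N, ind_ff hj1Nrev]; norm_num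
  have eA2 : AA N N N N = 2 := by
    simp only [AA, ind_refl, ind_true, ind_ff hNN]; norm_num
  rw [if_pos rfl, if_neg hj1N] at h0
  simp only [eA1, eA2, ind_refl, ind_true, ind_ff hj1N, ind_ff hj1Nrev, zero_mul, mul_zero,
    mul_one, one_mul, sub_zero, add_zero, zero_add, zero_sub, sub_self] at h0
  have hfτ : deriv Ω τ / Ω τ = f τ := rfl
  rw [hfτ]
  linarith [h0]

end Part4
end Stmt14


/-- For n ≥ 3, the metric h̃_{ij}(t) = Ω(t^n)² δ_{i+j,n+1} is flat iff
(1/Ω)'' = 0 on I, iff Ω(τ) = 1/(cτ + d) for some constants c, d. -/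
theorem stmt14 {n : ℕ} (hn : 3 ≤ n) (I : Set ℝ) (hIopen : IsOpen I)
    (hIconn : I.OrdConnected) (hIne : I.Nonempty)
    (Ω : ℝ → ℝ) (hΩ : ContDiffOn ℝ (⊤ : ℕ∞) Ω I) (hΩ0 : ∀ τ ∈ I, Ω τ ≠ 0) :
    (FlatOn {t : Pt n | t ⟨n - 1, by omega⟩ ∈ I}
        (fun t => Matrix.of fun i j : Fin n =>
          if j = i.rev then (Ω (t ⟨n - 1, by omega⟩)) ^ 2 else 0)
      ↔ ∀ τ ∈ I, deriv (deriv fun x => (Ω x)⁻¹) τ = 0)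
    ∧ (FlatOn {t : Pt n | t ⟨n - 1, by omega⟩ ∈ I}
        (fun t => Matrix.of fun i j : Fin n =>
          if j = i.rev then (Ω (t ⟨n - 1, by omega⟩)) ^ 2 else 0)
      ↔ ∃ c d : ℝ, ∀ τ ∈ I, Ω τ = (c * τ + d)⁻¹) := by
  classical
  open Stmt14 in
  set N : Fin n := ⟨n - 1, by omega⟩ with hNdef
  have hNval : (N : ℕ) = n - 1 := rfl
  have hNN : ¬ (N = N.rev) := by
    intro h
    apply_fun Fin.val at h
    rw [Fin.val_rev, hNval] at h
    omega
  set f : ℝ → ℝ := fun σ => deriv Ω σ / Ω σ with hfdef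
  set φ : ℝ → ℝ := fun x => (Ω x)⁻¹ with hφdef
  have hΩd : ∀ τ ∈ I, DifferentiableAt ℝ Ω τ := fun τ hτ =>
    (hΩ.contDiffAt (hIopen.mem_nhds hτ)).differentiableAt (by simp)
  have hωC : ContDiffOn ℝ (⊤ : ℕ∞) (deriv Ω) I := hΩ.deriv_of_isOpen hIopen (by simp)
  have hωd : ∀ τ ∈ I, DifferentiableAt ℝ (deriv Ω) τ := fun τ hτ =>
    (hωC.contDiffAt (hIopen.mem_nhds hτ)).differentiableAt (by simp)
  have hfC : ContDiffOn ℝ (⊤ : ℕ∞) f I := hωC.div hΩ hΩ0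
  have hfd : ∀ τ ∈ I, DifferentiableAt ℝ f τ := fun τ hτ =>
    (hfC.contDiffAt (hIopen.mem_nhds hτ)).differentiableAt (by simp)
  have hφC : ContDiffOn ℝ (⊤ : ℕ∞) φ I := hΩ.inv hΩ0
  have hφd : ∀ τ ∈ I, DifferentiableAt ℝ φ τ := fun τ hτ =>
    (hφC.contDiffAt (hIopen.mem_nhds hτ)).differentiableAt (by simp)
  have hpow : ∀ τ ∈ I, HasDerivAt (fun σ => Ω σ ^ 2) (2 * Ω τ * deriv Ω τ) τ := by
    intro τ hτ
    have := (hΩd τ hτ).hasDerivAt.fun_pow 2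
    exact this.congr_deriv (by push_cast; ring)
  -- the bridge between the two ODE formulations
  have bridge : ∀ τ ∈ I, (deriv f τ = f τ ^ 2 ↔ deriv (deriv φ) τ = 0) := by
    intro τ hτ
    have hA : Ω τ ≠ 0 := hΩ0 τ hτ
    have hfder : deriv f τ
        = (deriv (deriv Ω) τ * Ω τ - deriv Ω τ * deriv Ω τ) / Ω τ ^ 2 :=
      (((hωd τ hτ).hasDerivAt).div ((hΩd τ hτ).hasDerivAt) hA).deriv
    have hφder : ∀ σ ∈ I, deriv φ σ = -deriv Ω σ / Ω σ ^ 2 := fun σ hσ =>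
      (((hΩd σ hσ).hasDerivAt).inv (hΩ0 σ hσ)).deriv
    have hEE : deriv φ =ᶠ[nhds τ] fun σ => -deriv Ω σ / Ω σ ^ 2 :=
      Filter.eventuallyEq_of_mem (hIopen.mem_nhds hτ) hφder
    have h2 : deriv (deriv φ) τ
        = (-(deriv (deriv Ω) τ) * Ω τ ^ 2 - -deriv Ω τ * (2 * Ω τ * deriv Ω τ))
            / (Ω τ ^ 2) ^ 2 := by
      rw [hEE.deriv_eq]
      exact (((hωd τ hτ).hasDerivAt.neg).div (hpow τ hτ) (pow_ne_zero 2 hA)).deriv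
    rw [hfder, h2]
    have hfτ : f τ = deriv Ω τ / Ω τ := rfl
    rw [hfτ]
    constructor
    · intro h
      rw [div_eq_zero_iff]
      left
      rw [div_pow, div_eq_div_iff (pow_ne_zero 2 hA) (pow_ne_zero 2 hA)] at h
      have h3 : (deriv (deriv Ω) τ * Ω τ - 2 * deriv Ω τ ^ 2) * Ω τ ^ 2 = 0 := by
        linear_combination h
      rcases mul_eq_zero.mp h3 with h4 | h4
      · linear_combination (-(Ω τ)) * h4
      · exact absurd h4 (pow_ne_zero 2 hA)
    · intro h
      rw [div_eq_zero_iff] at h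
      rcases h with h | h
      · rw [div_pow, div_eq_div_iff (pow_ne_zero 2 hA) (pow_ne_zero 2 hA)]
        have h3 : Ω τ * (2 * deriv Ω τ ^ 2 - deriv (deriv Ω) τ * Ω τ) = 0 := by
          linear_combination h
        rcases mul_eq_zero.mp h3 with h4 | h4
        · exact absurd h4 hA
        · linear_combination (-(Ω τ ^ 2)) * h4
      · exact absurd h (pow_ne_zero 2 (pow_ne_zero 2 hA))
  -- flatness iff P'
  have hFlatIffP : FlatOn {t : Pt n | t N ∈ I} (gMet N Ω)
      ↔ (∀ τ ∈ I, deriv f τ = f τ ^ 2) := by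
    constructor
    · intro h
      exact flat_to_ode hn N rfl hIopen hΩ hΩ0 h
    · intro hP
      refine key N hNN hIopen hΩ hΩ0 (fun τ hτ => ?_)
      have h1 := (hfd τ hτ).hasDerivAt
      rw [hP τ hτ] at h1
      exact h1
  -- P' iff existence of c, d
  have hPiffQ : (∀ τ ∈ I, deriv f τ = f τ ^ 2)
      ↔ (∀ τ ∈ I, deriv (deriv φ) τ = 0) :=
    ⟨fun h τ hτ => (bridge τ hτ).mp (h τ hτ), fun h τ hτ => (bridge τ hτ).mpr (h τ hτ)⟩
  have hQiffE : (∀ τ ∈ I, deriv (deriv φ) τ = 0)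
      ↔ (∃ c d : ℝ, ∀ τ ∈ I, Ω τ = (c * τ + d)⁻¹) := by
    constructor
    · intro hQ
      have hφdiff : DifferentiableOn ℝ φ I := fun x hx => (hφd x hx).differentiableWithinAt
      have hψC : ContDiffOn ℝ (⊤ : ℕ∞) (deriv φ) I := hφC.deriv_of_isOpen hIopen (by simp)
      have hψd : ∀ x ∈ I, DifferentiableAt ℝ (deriv φ) x := fun x hx =>
        (hψC.contDiffAt (hIopen.mem_nhds hx)).differentiableAt (by simp)
      have hψdiff : DifferentiableOn ℝ (deriv φ) I := fun x hx =>
        (hψd x hx).differentiableWithinAt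
      have hconv : Convex ℝ I := convex_iff_ordConnected.mpr hIconn
      obtain ⟨τ0, hτ0⟩ := hIne
      set c := deriv φ τ0 with hcdef
      have hc : ∀ τ ∈ I, deriv φ τ = c := by
        intro τ hτ
        refine hconv.is_const_of_fderivWithin_eq_zero hψdiff (fun x hx => ?_) hτ hτ0
        have h0 : HasDerivAt (deriv φ) 0 x := by
          have h1 := (hψd x hx).hasDerivAt
          rw [hQ x hx] at h1
          exact h1
        have h2 := (h0.hasFDerivAt.hasFDerivWithinAt).fderivWithin (hIopen.uniqueDiffWithinAt hx)
        rw [h2]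
        ext v
        simp
      set d : ℝ := φ τ0 - c * τ0 with hddef
      refine ⟨c, d, fun τ hτ => ?_⟩
      have haff : φ τ - c * τ = φ τ0 - c * τ0 := by
        have hχdiff : DifferentiableOn ℝ (fun x => φ x - c * x) I := by
          intro x hx
          exact ((hφd x hx).sub ((differentiableAt_id.const_mul c))).differentiableWithinAt
        refine hconv.is_const_of_fderivWithin_eq_zero hχdiff (fun x hx => ?_) hτ hτ0
        have h1 : HasDerivAt (fun y => φ y - c * y) (deriv φ x - c) x :=
          ((hφd x hx).hasDerivAt).sub (by simpa using (hasDerivAt_id x).const_mul c)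
        rw [hc x hx, sub_self] at h1
        have h2 := (h1.hasFDerivAt.hasFDerivWithinAt).fderivWithin (hIopen.uniqueDiffWithinAt hx)
        rw [h2]
        ext v
        simp
      have h1 : (Ω τ)⁻¹ = c * τ + d := by
        have : φ τ = c * τ + d := by rw [hddef]; linarith [haff]
        exact this
      rw [← h1, inv_inv]
    · rintro ⟨c, d, h⟩ τ hτ
      have hφeq : ∀ x ∈ I, φ x = c * x + d := by
        intro x hx
        have hne : c * x + d ≠ 0 := by
          intro h0
          exact hΩ0 x hx (by rw [h x hx, h0, inv_zero])
        show (Ω x)⁻¹ = c * x + d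
        rw [h x hx, inv_inv]
      have hder : ∀ x ∈ I, deriv φ x = c := by
        intro x hx
        have hEE : φ =ᶠ[nhds x] (fun y => c * y + d) :=
          Filter.eventuallyEq_of_mem (hIopen.mem_nhds hx) hφeq
        rw [hEE.deriv_eq]
        have haff : HasDerivAt (fun y => c * y + d) c x := by
          simpa using ((hasDerivAt_id x).const_mul c).add_const d
        exact haff.deriv
      have hEE2 : deriv φ =ᶠ[nhds τ] (fun _ => c) :=
        Filter.eventuallyEq_of_mem (hIopen.mem_nhds hτ) hder
      rw [hEE2.deriv_eq]
      exact deriv_const τ c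
  exact ⟨hFlatIffP.trans hPiffQ, hFlatIffP.trans (hPiffQ.trans hQiffE)⟩
end
end

section
/- Let a, b, c, d be real numbers with ad − bc = 1, let W ⊆ ℝ² be open, and let f : W → ℝ be a smooth function satisfying f_{yyy} = (f_{xxy})² − f_{xyy}·f_{xxx} on W. Let W̃ = {(x,y) ∈ ℝ² : cy + d ≠ 0 and (x/(cy+d), (ay+b)/(cy+d)) ∈ W}, and define f̃ : W̃ → ℝ by f̃(x,y) = c·x⁴/(8(cy+d)) + (cy+d)²·f(x/(cy+d), (ay+b)/(cy+d)). Then f̃ satisfies the same equation on W̃: f̃_{yyy} = (f̃_{xxy})² − f̃_{xyy}·f̃_{xxx}. -/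
open scoped BigOperators

noncomputable section

variable {n : ℕ}

/-- Partial derivative in the first variable. -/
def pdx (f : ℝ × ℝ → ℝ) (p : ℝ × ℝ) : ℝ := fderiv ℝ f p (1, 0)
/-- Partial derivative in the second variable. -/
def pdy (f : ℝ × ℝ → ℝ) (p : ℝ × ℝ) : ℝ := fderiv ℝ f p (0, 1)

open scoped ContDiff
set_option maxHeartbeats 1600000

lemma pd_contDiffOn {W : Set (ℝ × ℝ)} (hW : IsOpen W) {g : ℝ × ℝ → ℝ}
    (hg : ContDiffOn ℝ ∞ g W) (v : ℝ × ℝ) :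
    ContDiffOn ℝ ∞ (fun p => fderiv ℝ g p v) W := by
  have h1 : ContDiffOn ℝ ∞ (fderiv ℝ g) W := hg.fderiv_of_isOpen hW (by norm_num)
  exact (ContinuousLinearMap.apply ℝ ℝ v).contDiff.comp_contDiffOn h1

lemma pdx_contDiffOn {W : Set (ℝ × ℝ)} (hW : IsOpen W) {g : ℝ × ℝ → ℝ}
    (hg : ContDiffOn ℝ ∞ g W) : ContDiffOn ℝ ∞ (pdx g) W := pd_contDiffOn hW hg _
lemma pdy_contDiffOn {W : Set (ℝ × ℝ)} (hW : IsOpen W) {g : ℝ × ℝ → ℝ}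
    (hg : ContDiffOn ℝ ∞ g W) : ContDiffOn ℝ ∞ (pdy g) W := pd_contDiffOn hW hg _

lemma diffAt {W : Set (ℝ × ℝ)} (hW : IsOpen W) {g : ℝ × ℝ → ℝ}
    (hg : ContDiffOn ℝ ∞ g W) {x : ℝ × ℝ} (hx : x ∈ W) : DifferentiableAt ℝ g x :=
  (hg.contDiffAt (hW.mem_nhds hx)).differentiableAt (by decide)

lemma pd_symm {W : Set (ℝ × ℝ)} (hW : IsOpen W) {g : ℝ × ℝ → ℝ}
    (hg : ContDiffOn ℝ ∞ g W) {x : ℝ × ℝ} (hx : x ∈ W) :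
    pdx (pdy g) x = pdy (pdx g) x := by
  have hF : ContDiffOn ℝ ∞ (fderiv ℝ g) W := hg.fderiv_of_isOpen hW (by norm_num)
  have hFd : DifferentiableAt ℝ (fderiv ℝ g) x :=
    (hF.contDiffAt (hW.mem_nhds hx)).differentiableAt (by decide)
  have hsym : IsSymmSndFDerivAt ℝ g x :=
    (hg.contDiffAt (hW.mem_nhds hx)).isSymmSndFDerivAt (by simp; exact WithTop.coe_le_coe.mpr le_top)
  have key : ∀ v w : ℝ × ℝ, fderiv ℝ (fun q => fderiv ℝ g q v) x w
      = fderiv ℝ (fderiv ℝ g) x w v := by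
    intro v w
    have : fderiv ℝ (fun q => (ContinuousLinearMap.apply ℝ ℝ v) (fderiv ℝ g q)) x
        = (ContinuousLinearMap.apply ℝ ℝ v).comp (fderiv ℝ (fderiv ℝ g) x) :=
      ((ContinuousLinearMap.apply ℝ ℝ v).hasFDerivAt.comp x hFd.hasFDerivAt).fderiv
    simpa using congrFun (congrArg DFunLike.coe this) w
  show fderiv ℝ (pdy g) x (1,0) = fderiv ℝ (pdx g) x (0,1)
  rw [show pdy g = fun q => fderiv ℝ g q (0,1) from rfl,
      show pdx g = fun q => fderiv ℝ g q (1,0) from rfl, key, key]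
  exact hsym.eq _ _

lemma hasFDerivAt_comp_pow {u : ℝ × ℝ → ℝ} {U : ℝ × ℝ →L[ℝ] ℝ} {p : ℝ × ℝ}
    (hu : HasFDerivAt u U p) (n : ℕ) :
    HasFDerivAt (fun q => u q ^ n) (((n : ℝ) * u p ^ (n - 1)) • U) p :=
  (hasDerivAt_pow n (u p)).comp_hasFDerivAt p hu

lemma hasFDerivAt_comp_inv {u : ℝ × ℝ → ℝ} {U : ℝ × ℝ →L[ℝ] ℝ} {p : ℝ × ℝ}
    (hu : HasFDerivAt u U p) (h : u p ≠ 0) :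
    HasFDerivAt (fun q => (u q)⁻¹) ((-(u p ^ 2)⁻¹) • U) p :=
  (hasDerivAt_inv h).comp_hasFDerivAt p hu

def phi (a b c d : ℝ) (q : ℝ × ℝ) : ℝ × ℝ :=
  (q.1 / (c * q.2 + d), (a * q.2 + b) / (c * q.2 + d))

lemma hasFDerivAt_s (c d : ℝ) (p : ℝ × ℝ) :
    HasFDerivAt (fun q : ℝ × ℝ => c * q.2 + d) (c • ContinuousLinearMap.snd ℝ ℝ ℝ) p :=
  (hasFDerivAt_snd.const_mul c).add_const d

lemma phi_hasFDerivAt (a b c d : ℝ) (h1 : a * d - b * c = 1) (p : ℝ × ℝ)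
    (hs : c * p.2 + d ≠ 0) :
    ∃ L : ℝ × ℝ →L[ℝ] ℝ × ℝ, HasFDerivAt (phi a b c d) L p ∧
      L (1, 0) = ((c * p.2 + d)⁻¹, 0) ∧
      L (0, 1) = (-(c * p.1) * ((c * p.2 + d)⁻¹)^2, ((c * p.2 + d)⁻¹)^2) := by
  have hsl := hasFDerivAt_s c d p
  have h2 : HasFDerivAt (fun q : ℝ × ℝ => a * q.2 + b) (a • ContinuousLinearMap.snd ℝ ℝ ℝ) p :=
    (hasFDerivAt_snd.const_mul a).add_const b
  have hfst : HasFDerivAt (fun q : ℝ × ℝ => q.1) (ContinuousLinearMap.fst ℝ ℝ ℝ) p :=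
    hasFDerivAt_fst
  have hw := hasFDerivAt_comp_inv hsl hs
  have hphi : phi a b c d = fun q : ℝ × ℝ =>
      (q.1 * (c * q.2 + d)⁻¹, (a * q.2 + b) * (c * q.2 + d)⁻¹) := by
    funext q; simp [phi, div_eq_mul_inv]
  rw [hphi]
  refine ⟨_, (hfst.mul hw).prodMk (h2.mul hw), ?_, ?_⟩
  · simp only [ContinuousLinearMap.prod_apply, ContinuousLinearMap.add_apply,
        ContinuousLinearMap.smul_apply, ContinuousLinearMap.coe_fst',
        ContinuousLinearMap.coe_snd', smul_eq_mul, ContinuousLinearMap.neg_apply,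
        Prod.mk.injEq]
    norm_num
  · simp only [ContinuousLinearMap.prod_apply, ContinuousLinearMap.add_apply,
        ContinuousLinearMap.smul_apply, ContinuousLinearMap.coe_fst',
        ContinuousLinearMap.coe_snd', smul_eq_mul, ContinuousLinearMap.neg_apply,
        Prod.mk.injEq]
    norm_num
    refine ⟨by ring, ?_⟩
    have hkey : (c * p.2 + d) * a - (a * p.2 + b) * c = 1 := by linear_combination h1
    have e2 : (c * p.2 + d)⁻¹ = ((c * p.2 + d) ^ 2)⁻¹ * (c * p.2 + d) := by
      rw [sq, mul_inv, mul_assoc, inv_mul_cancel₀ hs, mul_one]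
    calc -((a * p.2 + b) * (((c * p.2 + d) ^ 2)⁻¹ * c)) + (c * p.2 + d)⁻¹ * a
        = ((c * p.2 + d) ^ 2)⁻¹ * ((c * p.2 + d) * a - (a * p.2 + b) * c) := by
          rw [e2]; ring
      _ = ((c * p.2 + d) ^ 2)⁻¹ := by rw [hkey, mul_one]

lemma comp_hasFDerivAt (a b c d : ℝ) (h1 : a * d - b * c = 1) (p : ℝ × ℝ)
    (hs : c * p.2 + d ≠ 0) (g : ℝ × ℝ → ℝ) (hg : DifferentiableAt ℝ g (phi a b c d p)) :
    ∃ L : ℝ × ℝ →L[ℝ] ℝ, HasFDerivAt (fun q => g (phi a b c d q)) L p ∧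
      L (1, 0) = pdx g (phi a b c d p) * (c * p.2 + d)⁻¹ ∧
      L (0, 1) = (-(c * p.1) * pdx g (phi a b c d p) + pdy g (phi a b c d p))
        * ((c * p.2 + d)⁻¹)^2 := by
  obtain ⟨L0, hL0, h10, h01⟩ := phi_hasFDerivAt a b c d h1 p hs
  refine ⟨(fderiv ℝ g (phi a b c d p)).comp L0, hg.hasFDerivAt.comp p hL0, ?_, ?_⟩
  · rw [ContinuousLinearMap.comp_apply, h10]
    have e : ((c * p.2 + d)⁻¹, (0:ℝ)) = (c * p.2 + d)⁻¹ • ((1:ℝ), (0:ℝ)) := by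
      simp [Prod.smul_mk]
    rw [e, map_smul, smul_eq_mul, mul_comm]; rfl
  · rw [ContinuousLinearMap.comp_apply, h01]
    have e : (-(c * p.1) * ((c * p.2 + d)⁻¹)^2, ((c * p.2 + d)⁻¹)^2)
        = (-(c * p.1) * ((c * p.2 + d)⁻¹)^2) • ((1:ℝ), (0:ℝ))
          + (((c * p.2 + d)⁻¹)^2) • ((0:ℝ), (1:ℝ)) := by
      simp [Prod.smul_mk]
    rw [e, map_add, map_smul, map_smul, smul_eq_mul, smul_eq_mul]
    show _ = (-(c*p.1) * pdx g (phi a b c d p) + pdy g (phi a b c d p)) * ((c*p.2+d)⁻¹)^2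
    unfold pdx pdy; ring

def Fft (a b c d : ℝ) (f : ℝ × ℝ → ℝ) : ℝ × ℝ → ℝ := fun q =>
  c/8 * q.1^4 * (c*q.2+d)⁻¹ + (c*q.2+d)^2 * f (phi a b c d q)
def FA (a b c d : ℝ) (f : ℝ × ℝ → ℝ) : ℝ × ℝ → ℝ := fun q =>
  c/2 * q.1^3 * (c*q.2+d)⁻¹ + (c*q.2+d) * pdx f (phi a b c d q)
def FG (a b c d : ℝ) (f : ℝ × ℝ → ℝ) : ℝ × ℝ → ℝ := fun q =>
  -(c^2)/8 * q.1^4 * ((c*q.2+d)⁻¹)^2 + 2*c*(c*q.2+d) * f (phi a b c d q)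
    - c*q.1 * pdx f (phi a b c d q) + pdy f (phi a b c d q)
def FB (a b c d : ℝ) (f : ℝ × ℝ → ℝ) : ℝ × ℝ → ℝ := fun q =>
  3*c/2 * q.1^2 * (c*q.2+d)⁻¹ + pdx (pdx f) (phi a b c d q)
def FE (a b c d : ℝ) (f : ℝ × ℝ → ℝ) : ℝ × ℝ → ℝ := fun q =>
  -(c^2)/2 * q.1^3 * ((c*q.2+d)⁻¹)^2 + c * pdx f (phi a b c d q)
    - c*q.1 * (c*q.2+d)⁻¹ * pdx (pdx f) (phi a b c d q)
    + (c*q.2+d)⁻¹ * pdy (pdx f) (phi a b c d q)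
def FH (a b c d : ℝ) (f : ℝ × ℝ → ℝ) : ℝ × ℝ → ℝ := fun q =>
  c^3/4 * q.1^4 * ((c*q.2+d)⁻¹)^3 + 2*c^2 * f (phi a b c d q)
    - 2*c^2*q.1 * (c*q.2+d)⁻¹ * pdx f (phi a b c d q)
    + 2*c*(c*q.2+d)⁻¹ * pdy f (phi a b c d q)
    + c^2*q.1^2*((c*q.2+d)⁻¹)^2 * pdx (pdx f) (phi a b c d q)
    - 2*c*q.1*((c*q.2+d)⁻¹)^2 * pdy (pdx f) (phi a b c d q)
    + ((c*q.2+d)⁻¹)^2 * pdy (pdy f) (phi a b c d q)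

section derivs
variable {a b c d : ℝ} {f : ℝ × ℝ → ℝ} {W : Set (ℝ × ℝ)} {p : ℝ × ℝ}

lemma dFft (h1 : a*d - b*c = 1) (hW : IsOpen W) (hf : ContDiffOn ℝ ∞ f W)
    (hs : c*p.2+d ≠ 0) (hp : phi a b c d p ∈ W) :
    ∃ L : ℝ × ℝ →L[ℝ] ℝ, HasFDerivAt (Fft a b c d f) L p ∧
      L (1,0) = FA a b c d f p ∧ L (0,1) = FG a b c d f p := by
  obtain ⟨Lf, hLf, ef10, ef01⟩ := comp_hasFDerivAt a b c d h1 p hs f (diffAt hW hf hp)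
  have hsl := hasFDerivAt_s c d p
  have hw := hasFDerivAt_comp_inv hsl hs
  have hfst : HasFDerivAt (fun q : ℝ × ℝ => q.1) (ContinuousLinearMap.fst ℝ ℝ ℝ) p :=
    hasFDerivAt_fst
  refine ⟨_, (((hasFDerivAt_comp_pow hfst 4).const_mul (c/8)).mul hw).add
      ((hasFDerivAt_comp_pow hsl 2).mul hLf), ?_, ?_⟩ <;>
  · simp only [FA, FG]
    simp only [ef10, ef01, ContinuousLinearMap.add_apply, ContinuousLinearMap.sub_apply,
      ContinuousLinearMap.smul_apply, ContinuousLinearMap.coe_fst',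
      ContinuousLinearMap.coe_snd', smul_eq_mul, ContinuousLinearMap.neg_apply]
    norm_num
    field_simp
    ring

lemma dFA (h1 : a*d - b*c = 1) (hW : IsOpen W) (hf : ContDiffOn ℝ ∞ f W)
    (hs : c*p.2+d ≠ 0) (hp : phi a b c d p ∈ W) :
    ∃ L : ℝ × ℝ →L[ℝ] ℝ, HasFDerivAt (FA a b c d f) L p ∧
      L (1,0) = FB a b c d f p ∧ L (0,1) = FE a b c d f p := by
  obtain ⟨Lfx, hLfx, e10, e01⟩ := comp_hasFDerivAt a b c d h1 p hs (pdx f)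
    (diffAt hW (pdx_contDiffOn hW hf) hp)
  have hsl := hasFDerivAt_s c d p
  have hw := hasFDerivAt_comp_inv hsl hs
  have hfst : HasFDerivAt (fun q : ℝ × ℝ => q.1) (ContinuousLinearMap.fst ℝ ℝ ℝ) p :=
    hasFDerivAt_fst
  refine ⟨_, (((hasFDerivAt_comp_pow hfst 3).const_mul (c/2)).mul hw).add
      (hsl.mul hLfx), ?_, ?_⟩ <;>
  · simp only [FB, FE]
    simp only [e10, e01, ContinuousLinearMap.add_apply, ContinuousLinearMap.sub_apply,
      ContinuousLinearMap.smul_apply, ContinuousLinearMap.coe_fst',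
      ContinuousLinearMap.coe_snd', smul_eq_mul, ContinuousLinearMap.neg_apply]
    norm_num
    field_simp
    all_goals ring

lemma dFG (h1 : a*d - b*c = 1) (hW : IsOpen W) (hf : ContDiffOn ℝ ∞ f W)
    (hs : c*p.2+d ≠ 0) (hp : phi a b c d p ∈ W) :
    ∃ L : ℝ × ℝ →L[ℝ] ℝ, HasFDerivAt (FG a b c d f) L p ∧
      L (0,1) = FH a b c d f p := by
  obtain ⟨Lf, hLf, ef10, ef01⟩ := comp_hasFDerivAt a b c d h1 p hs f (diffAt hW hf hp)
  obtain ⟨Lfx, hLfx, ex10, ex01⟩ := comp_hasFDerivAt a b c d h1 p hs (pdx f)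
    (diffAt hW (pdx_contDiffOn hW hf) hp)
  obtain ⟨Lfy, hLfy, ey10, ey01⟩ := comp_hasFDerivAt a b c d h1 p hs (pdy f)
    (diffAt hW (pdy_contDiffOn hW hf) hp)
  have hsl := hasFDerivAt_s c d p
  have hw := hasFDerivAt_comp_inv hsl hs
  have hfst : HasFDerivAt (fun q : ℝ × ℝ => q.1) (ContinuousLinearMap.fst ℝ ℝ ℝ) p :=
    hasFDerivAt_fst
  have hT1 := ((hasFDerivAt_comp_pow hfst 4).const_mul (-(c^2)/8)).mul
      (hasFDerivAt_comp_pow hw 2)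
  have hT2 := (hsl.const_mul (2*c)).mul hLf
  have hT3 := (hfst.const_mul c).mul hLfx
  refine ⟨_, ((hT1.add hT2).sub hT3).add hLfy, ?_⟩
  simp only [FH]
  simp only [ef10, ef01, ex10, ex01, ey10, ey01, ContinuousLinearMap.add_apply,
    ContinuousLinearMap.sub_apply, ContinuousLinearMap.smul_apply,
    ContinuousLinearMap.coe_fst', ContinuousLinearMap.coe_snd', smul_eq_mul,
    ContinuousLinearMap.neg_apply]
  norm_num
  rw [pd_symm hW hf hp]
  field_simp
  ring

lemma dFB (h1 : a*d - b*c = 1) (hW : IsOpen W) (hf : ContDiffOn ℝ ∞ f W)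
    (hs : c*p.2+d ≠ 0) (hp : phi a b c d p ∈ W) :
    ∃ L : ℝ × ℝ →L[ℝ] ℝ, HasFDerivAt (FB a b c d f) L p ∧
      L (1,0) = (3*c*p.1 + pdx (pdx (pdx f)) (phi a b c d p)) * (c*p.2+d)⁻¹ ∧
      L (0,1) = (-(3*c^2*p.1^2)/2 - c*p.1 * pdx (pdx (pdx f)) (phi a b c d p)
        + pdy (pdx (pdx f)) (phi a b c d p)) * ((c*p.2+d)⁻¹)^2 := by
  obtain ⟨Lxx, hLxx, e10, e01⟩ := comp_hasFDerivAt a b c d h1 p hs (pdx (pdx f))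
    (diffAt hW (pdx_contDiffOn hW (pdx_contDiffOn hW hf)) hp)
  have hsl := hasFDerivAt_s c d p
  have hw := hasFDerivAt_comp_inv hsl hs
  have hfst : HasFDerivAt (fun q : ℝ × ℝ => q.1) (ContinuousLinearMap.fst ℝ ℝ ℝ) p :=
    hasFDerivAt_fst
  refine ⟨_, (((hasFDerivAt_comp_pow hfst 2).const_mul (3*c/2)).mul hw).add hLxx, ?_, ?_⟩ <;>
  · simp only [e10, e01, ContinuousLinearMap.add_apply, ContinuousLinearMap.sub_apply,
      ContinuousLinearMap.smul_apply, ContinuousLinearMap.coe_fst',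
      ContinuousLinearMap.coe_snd', smul_eq_mul, ContinuousLinearMap.neg_apply]
    norm_num
    field_simp
    all_goals ring

lemma dFE (h1 : a*d - b*c = 1) (hW : IsOpen W) (hf : ContDiffOn ℝ ∞ f W)
    (hs : c*p.2+d ≠ 0) (hp : phi a b c d p ∈ W) :
    ∃ L : ℝ × ℝ →L[ℝ] ℝ, HasFDerivAt (FE a b c d f) L p ∧
      L (0,1) = (c^3*p.1^3 + c^2*p.1^2 * pdx (pdx (pdx f)) (phi a b c d p)
        - c*p.1 * pdy (pdx (pdx f)) (phi a b c d p)
        - c*p.1 * pdx (pdy (pdx f)) (phi a b c d p)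
        + pdy (pdy (pdx f)) (phi a b c d p)) * ((c*p.2+d)⁻¹)^3 := by
  obtain ⟨Lfx, hLfx, ex10, ex01⟩ := comp_hasFDerivAt a b c d h1 p hs (pdx f)
    (diffAt hW (pdx_contDiffOn hW hf) hp)
  obtain ⟨Lxx, hLxx, exx10, exx01⟩ := comp_hasFDerivAt a b c d h1 p hs (pdx (pdx f))
    (diffAt hW (pdx_contDiffOn hW (pdx_contDiffOn hW hf)) hp)
  obtain ⟨Lxy, hLxy, exy10, exy01⟩ := comp_hasFDerivAt a b c d h1 p hs (pdy (pdx f))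
    (diffAt hW (pdy_contDiffOn hW (pdx_contDiffOn hW hf)) hp)
  have hsl := hasFDerivAt_s c d p
  have hw := hasFDerivAt_comp_inv hsl hs
  have hfst : HasFDerivAt (fun q : ℝ × ℝ => q.1) (ContinuousLinearMap.fst ℝ ℝ ℝ) p :=
    hasFDerivAt_fst
  have hT1 := ((hasFDerivAt_comp_pow hfst 3).const_mul (-(c^2)/2)).mul
      (hasFDerivAt_comp_pow hw 2)
  have hT2 := hLfx.const_mul c
  have hT3 := ((hfst.const_mul c).mul hw).mul hLxx
  refine ⟨_, ((hT1.add hT2).sub hT3).add (hw.mul hLxy), ?_⟩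
  simp only [ex10, ex01, exx10, exx01, exy10, exy01, ContinuousLinearMap.add_apply,
    ContinuousLinearMap.sub_apply, ContinuousLinearMap.smul_apply,
    ContinuousLinearMap.coe_fst', ContinuousLinearMap.coe_snd', smul_eq_mul,
    ContinuousLinearMap.neg_apply]
  norm_num
  field_simp
  ring

lemma dFH (h1 : a*d - b*c = 1) (hW : IsOpen W) (hf : ContDiffOn ℝ ∞ f W)
    (hs : c*p.2+d ≠ 0) (hp : phi a b c d p ∈ W) :
    ∃ L : ℝ × ℝ →L[ℝ] ℝ, HasFDerivAt (FH a b c d f) L p ∧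
      L (0,1) = (-(3*c^4*p.1^4)/4
        + (2*c^2*p.1 * (pdy (pdx f) (phi a b c d p) - pdx (pdy f) (phi a b c d p)))
            * (c*p.2+d)
        - c^3*p.1^3 * pdx (pdx (pdx f)) (phi a b c d p)
        + c^2*p.1^2 * pdy (pdx (pdx f)) (phi a b c d p)
        + 2*c^2*p.1^2 * pdx (pdy (pdx f)) (phi a b c d p)
        - 2*c*p.1 * pdy (pdy (pdx f)) (phi a b c d p)
        - c*p.1 * pdx (pdy (pdy f)) (phi a b c d p)
        + pdy (pdy (pdy f)) (phi a b c d p)) * ((c*p.2+d)⁻¹)^4 := by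
  obtain ⟨Lf, hLf, ef10, ef01⟩ := comp_hasFDerivAt a b c d h1 p hs f (diffAt hW hf hp)
  obtain ⟨Lfx, hLfx, ex10, ex01⟩ := comp_hasFDerivAt a b c d h1 p hs (pdx f)
    (diffAt hW (pdx_contDiffOn hW hf) hp)
  obtain ⟨Lfy, hLfy, ey10, ey01⟩ := comp_hasFDerivAt a b c d h1 p hs (pdy f)
    (diffAt hW (pdy_contDiffOn hW hf) hp)
  obtain ⟨Lxx, hLxx, exx10, exx01⟩ := comp_hasFDerivAt a b c d h1 p hs (pdx (pdx f))
    (diffAt hW (pdx_contDiffOn hW (pdx_contDiffOn hW hf)) hp)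
  obtain ⟨Lxy, hLxy, exy10, exy01⟩ := comp_hasFDerivAt a b c d h1 p hs (pdy (pdx f))
    (diffAt hW (pdy_contDiffOn hW (pdx_contDiffOn hW hf)) hp)
  obtain ⟨Lyy, hLyy, eyy10, eyy01⟩ := comp_hasFDerivAt a b c d h1 p hs (pdy (pdy f))
    (diffAt hW (pdy_contDiffOn hW (pdy_contDiffOn hW hf)) hp)
  have hsl := hasFDerivAt_s c d p
  have hw := hasFDerivAt_comp_inv hsl hs
  have hfst : HasFDerivAt (fun q : ℝ × ℝ => q.1) (ContinuousLinearMap.fst ℝ ℝ ℝ) p :=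
    hasFDerivAt_fst
  have hT1 := ((hasFDerivAt_comp_pow hfst 4).const_mul (c^3/4)).mul
      (hasFDerivAt_comp_pow hw 3)
  have hT2 := hLf.const_mul (2*c^2)
  have hT3 := ((hfst.const_mul (2*c^2)).mul hw).mul hLfx
  have hT4 := (hw.const_mul (2*c)).mul hLfy
  have hT5 := (((hasFDerivAt_comp_pow hfst 2).const_mul (c^2)).mul
      (hasFDerivAt_comp_pow hw 2)).mul hLxx
  have hT6 := ((hfst.const_mul (2*c)).mul (hasFDerivAt_comp_pow hw 2)).mul hLxy
  have hT7 := (hasFDerivAt_comp_pow hw 2).mul hLyy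
  refine ⟨_, (((((hT1.add hT2).sub hT3).add hT4).add hT5).sub hT6).add hT7, ?_⟩
  simp only [ef10, ef01, ex10, ex01, ey10, ey01, exx10, exx01, exy10, exy01, eyy10, eyy01,
    ContinuousLinearMap.add_apply, ContinuousLinearMap.sub_apply,
    ContinuousLinearMap.smul_apply, ContinuousLinearMap.coe_fst',
    ContinuousLinearMap.coe_snd', smul_eq_mul, ContinuousLinearMap.neg_apply]
  norm_num
  field_simp
  ring


end derivs

/-- The SL(2,ℝ)-action on solutions of the WDVV reduction
f_{yyy} = (f_{xxy})² − f_{xyy} f_{xxx}. -/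
theorem stmt15 (a b c d : ℝ) (habcd : a * d - b * c = 1)
    (W : Set (ℝ × ℝ)) (hW : IsOpen W)
    (f : ℝ × ℝ → ℝ) (hf : ContDiffOn ℝ (⊤ : ℕ∞) f W)
    (heq : ∀ p ∈ W,
      pdy (pdy (pdy f)) p
        = (pdy (pdx (pdx f)) p) ^ 2 - pdy (pdy (pdx f)) p * pdx (pdx (pdx f)) p)
    (Wt : Set (ℝ × ℝ))
    (hWt : Wt = {p : ℝ × ℝ | c * p.2 + d ≠ 0 ∧
      (p.1 / (c * p.2 + d), (a * p.2 + b) / (c * p.2 + d)) ∈ W})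
    (ft : ℝ × ℝ → ℝ)
    (hft : ∀ p : ℝ × ℝ, ft p = c * p.1 ^ 4 / (8 * (c * p.2 + d))
      + (c * p.2 + d) ^ 2 * f (p.1 / (c * p.2 + d), (a * p.2 + b) / (c * p.2 + d))) :
    ∀ p ∈ Wt,
      pdy (pdy (pdy ft)) p
        = (pdy (pdx (pdx ft)) p) ^ 2 - pdy (pdy (pdx ft)) p * pdx (pdx (pdx ft)) p := by
  intro p hp
  have hinf : ContDiffOn ℝ ∞ f W := hf.of_le (by simp)
  have hWtsub : ∀ q, q ∈ Wt → (c*q.2+d ≠ 0) ∧ phi a b c d q ∈ W := by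
    intro q hq; rw [hWt] at hq; exact ⟨hq.1, hq.2⟩
  have hV : IsOpen {q : ℝ × ℝ | c * q.2 + d ≠ 0} := by
    have hcont2 : Continuous fun q : ℝ × ℝ => c * q.2 + d :=
      (continuous_const.mul continuous_snd).add continuous_const
    exact isOpen_compl_singleton.preimage hcont2
  have hWtopen : IsOpen Wt := by
    rw [hWt]
    have hcont : ContinuousOn (phi a b c d) {q : ℝ × ℝ | c * q.2 + d ≠ 0} := by
      apply ContinuousOn.prodMk
      · exact continuousOn_fst.div
          ((continuous_const.mul continuous_snd).add continuous_const).continuousOn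
          (fun q hq => hq)
      · exact ((continuous_const.mul continuous_snd).add continuous_const).continuousOn.div
          ((continuous_const.mul continuous_snd).add continuous_const).continuousOn
          (fun q hq => hq)
    exact hcont.isOpen_inter_preimage hV hW
  rw [hWt] at hWtopen
  have hfteq : ft = Fft a b c d f := by
    funext q; rw [hft q]; simp only [Fft, phi, div_eq_mul_inv, mul_inv]; ring
  have hA : ∀ q, q ∈ Wt → pdx ft q = FA a b c d f q := by
    intro q hq
    obtain ⟨hs', hp'⟩ := hWtsub q hq
    obtain ⟨L, hL, e10, _⟩ := dFft habcd hW hinf hs' hp'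
    show fderiv ℝ ft q (1,0) = _
    rw [hfteq, hL.fderiv]; exact e10
  have hG : ∀ q, q ∈ Wt → pdy ft q = FG a b c d f q := by
    intro q hq
    obtain ⟨hs', hp'⟩ := hWtsub q hq
    obtain ⟨L, hL, _, e01⟩ := dFft habcd hW hinf hs' hp'
    show fderiv ℝ ft q (0,1) = _
    rw [hfteq, hL.fderiv]; exact e01
  have hWtnhds : ∀ q, q ∈ Wt → Wt ∈ nhds q := by
    intro q hq; rw [hWt] at hq ⊢; exact hWtopen.mem_nhds hq
  have hB : ∀ q, q ∈ Wt → pdx (pdx ft) q = FB a b c d f q := by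
    intro q hq
    obtain ⟨hs', hp'⟩ := hWtsub q hq
    obtain ⟨L, hL, e10, _⟩ := dFA habcd hW hinf hs' hp'
    have hev : pdx ft =ᶠ[nhds q] FA a b c d f := by
      filter_upwards [hWtnhds q hq] with r hr using hA r hr
    show fderiv ℝ (pdx ft) q (1,0) = _
    rw [hev.fderiv_eq, hL.fderiv]; exact e10
  have hE : ∀ q, q ∈ Wt → pdy (pdx ft) q = FE a b c d f q := by
    intro q hq
    obtain ⟨hs', hp'⟩ := hWtsub q hq
    obtain ⟨L, hL, _, e01⟩ := dFA habcd hW hinf hs' hp'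
    have hev : pdx ft =ᶠ[nhds q] FA a b c d f := by
      filter_upwards [hWtnhds q hq] with r hr using hA r hr
    show fderiv ℝ (pdx ft) q (0,1) = _
    rw [hev.fderiv_eq, hL.fderiv]; exact e01
  have hH : ∀ q, q ∈ Wt → pdy (pdy ft) q = FH a b c d f q := by
    intro q hq
    obtain ⟨hs', hp'⟩ := hWtsub q hq
    obtain ⟨L, hL, e01⟩ := dFG habcd hW hinf hs' hp'
    have hev : pdy ft =ᶠ[nhds q] FG a b c d f := by
      filter_upwards [hWtnhds q hq] with r hr using hG r hr
    show fderiv ℝ (pdy ft) q (0,1) = _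
    rw [hev.fderiv_eq, hL.fderiv]; exact e01
  obtain ⟨hs, hpW⟩ := hWtsub p hp
  have hevB : pdx (pdx ft) =ᶠ[nhds p] FB a b c d f := by
    filter_upwards [hWtnhds p hp] with r hr using hB r hr
  have hevE : pdy (pdx ft) =ᶠ[nhds p] FE a b c d f := by
    filter_upwards [hWtnhds p hp] with r hr using hE r hr
  have hevH : pdy (pdy ft) =ᶠ[nhds p] FH a b c d f := by
    filter_upwards [hWtnhds p hp] with r hr using hH r hr
  obtain ⟨LB, hLB, eB10, eB01⟩ := dFB habcd hW hinf hs hpW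
  obtain ⟨LE, hLE, eE01⟩ := dFE habcd hW hinf hs hpW
  obtain ⟨LH, hLH, eH01⟩ := dFH habcd hW hinf hs hpW
  have hC : pdx (pdx (pdx ft)) p
      = (3*c*p.1 + pdx (pdx (pdx f)) (phi a b c d p)) * (c*p.2+d)⁻¹ := by
    show fderiv ℝ (pdx (pdx ft)) p (1,0) = _
    rw [hevB.fderiv_eq, hLB.fderiv]; exact eB10
  have hD : pdy (pdx (pdx ft)) p
      = (-(3*c^2*p.1^2)/2 - c*p.1 * pdx (pdx (pdx f)) (phi a b c d p)
        + pdy (pdx (pdx f)) (phi a b c d p)) * ((c*p.2+d)⁻¹)^2 := by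
    show fderiv ℝ (pdx (pdx ft)) p (0,1) = _
    rw [hevB.fderiv_eq, hLB.fderiv]; exact eB01
  have hFv : pdy (pdy (pdx ft)) p
      = (c^3*p.1^3 + c^2*p.1^2 * pdx (pdx (pdx f)) (phi a b c d p)
        - c*p.1 * pdy (pdx (pdx f)) (phi a b c d p)
        - c*p.1 * pdx (pdy (pdx f)) (phi a b c d p)
        + pdy (pdy (pdx f)) (phi a b c d p)) * ((c*p.2+d)⁻¹)^3 := by
    show fderiv ℝ (pdy (pdx ft)) p (0,1) = _
    rw [hevE.fderiv_eq, hLE.fderiv]; exact eE01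
  have hI : pdy (pdy (pdy ft)) p
      = (-(3*c^4*p.1^4)/4
        + (2*c^2*p.1 * (pdy (pdx f) (phi a b c d p) - pdx (pdy f) (phi a b c d p)))
            * (c*p.2+d)
        - c^3*p.1^3 * pdx (pdx (pdx f)) (phi a b c d p)
        + c^2*p.1^2 * pdy (pdx (pdx f)) (phi a b c d p)
        + 2*c^2*p.1^2 * pdx (pdy (pdx f)) (phi a b c d p)
        - 2*c*p.1 * pdy (pdy (pdx f)) (phi a b c d p)
        - c*p.1 * pdx (pdy (pdy f)) (phi a b c d p)
        + pdy (pdy (pdy f)) (phi a b c d p)) * ((c*p.2+d)⁻¹)^4 := by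
    show fderiv ℝ (pdy (pdy ft)) p (0,1) = _
    rw [hevH.fderiv_eq, hLH.fderiv]; exact eH01
  have S1 : pdx (pdy f) (phi a b c d p) = pdy (pdx f) (phi a b c d p) :=
    pd_symm hW hinf hpW
  have S2 : pdx (pdy (pdx f)) (phi a b c d p) = pdy (pdx (pdx f)) (phi a b c d p) :=
    pd_symm hW (pdx_contDiffOn hW hinf) hpW
  have S3 : pdx (pdy (pdy f)) (phi a b c d p) = pdy (pdy (pdx f)) (phi a b c d p) := by
    have t1 : pdx (pdy (pdy f)) (phi a b c d p) = pdy (pdx (pdy f)) (phi a b c d p) :=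
      pd_symm hW (pdy_contDiffOn hW hinf) hpW
    have hev : pdx (pdy f) =ᶠ[nhds (phi a b c d p)] pdy (pdx f) := by
      filter_upwards [hW.mem_nhds hpW] with r hr using pd_symm hW hinf hr
    have t2 : pdy (pdx (pdy f)) (phi a b c d p) = pdy (pdy (pdx f)) (phi a b c d p) := by
      show fderiv ℝ (pdx (pdy f)) (phi a b c d p) (0,1) = _
      rw [hev.fderiv_eq]; rfl
    exact t1.trans t2
  rw [hI, hD, hFv, hC, S1, S2, S3]
  have hkey := heq (phi a b c d p) hpW
  rw [show (phi a b c d p) = (p.1 / (c * p.2 + d), (a * p.2 + b) / (c * p.2 + d)) from rfl]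
    at hkey
  simp only [phi]
  rw [hkey]
  field_simp
  ring
end
end
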